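/- arXiv:math/0401087 — 7 statements merged into one kernel-verified Lean document; each statement's English description precedes it below -/
import Mathlib

section
/- Let Ξ be a set of affine functions on ℤ^∞[λ] such that S̄_k φ ∈ Ξ for every φ ∈ Ξ and every nonzero integer k, and set Σ := { x ∈ ℤ^∞[λ] : φ(x) ≥ 0 for all φ ∈ Ξ }. Then Σ is stable under the Kashiwara operators f̃_p: if x ∈ Σ, p ∈ I, and f̃_p x ≠ 0, then f̃_p x ∈ Σ. -/
noncomputable section

/-- An affine function `φ(x) = c + Σ_k φ_k x_k` on `ℤ^∞[λ]`: a constant term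
together with a finitely supported family of coefficients indexed by the
nonzero integers (the coefficient at index `0` is always `0` below). -/
abbrev Aff : Type := ℚ × (ℤ →₀ ℚ)

/-- Evaluation of an affine function at a rational point. -/
def evalF (φ : Aff) (x : ℤ → ℚ) : ℚ := φ.1 + ∑ t ∈ φ.2.support, φ.2 t * x t

/-- Evaluation of an affine function at an integer point. -/
def evalZ (φ : Aff) (x : ℤ →₀ ℤ) : ℚ := φ.1 + ∑ t ∈ φ.2.support, φ.2 t * (x t : ℚ)

variable {I : Type*}

/-- `σ_k(x) = x_k + Σ_{j>k, j≠0} a_{i_k i_j} x_j` for `k ≥ 1`, with the extra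
constant `-ℓ_{i_k}` when `k ≤ -1`. -/
def sigmaG (a : I → I → ℤ) (ℓ : I → ℤ) (ι : ℤ → I) (k : ℤ) (x : ℤ →₀ ℤ) : ℤ :=
  (if k ≤ -1 then -ℓ (ι k) else 0) + x k +
    ∑ j ∈ x.support.filter (fun j => k < j ∧ j ≠ 0), a (ι k) (ι j) * x j

/-- The affine function `β̄_k = σ_k − σ_{k^{(+)}}`, given explicitly:
`β̄_k(x) = x_k + Σ_{k<j<k^{(+)}, j≠0} a_{i_k i_j} x_j + x_{k^{(+)}}`, plus the
constant `-ℓ_{i_k}` exactly when `k ≤ -1 < 1 ≤ k^{(+)}`. -/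
def betaBarG (a : I → I → ℤ) (ℓ : I → ℤ) (ι : ℤ → I) (kp : ℤ → ℤ) (k : ℤ) : Aff :=
  ⟨if k ≤ -1 ∧ 1 ≤ kp k then -(ℓ (ι k) : ℚ) else 0,
   Finsupp.onFinset (insert k (insert (kp k) (Finset.Ioo k (kp k))))
     (fun j => (if j = k then 1 else 0) + (if j = kp k then 1 else 0)
       + (if k < j ∧ j < kp k ∧ j ≠ 0 then (a (ι k) (ι j) : ℚ) else 0))
     (by
       intro j hj
       simp only [Finset.mem_insert, Finset.mem_Ioo]
       by_contra hc
       push_neg at hc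
       obtain ⟨h1, h2, h3⟩ := hc
       apply hj
       simp only [if_neg h1, if_neg h2,
         if_neg (show ¬(k < j ∧ j < kp k ∧ j ≠ 0) by omega)]
       ring)⟩

/-- The operator `S̄_k` on affine functions: `S̄_k φ = φ − φ_k β̄_k` if `φ_k > 0`
and `S̄_k φ = φ − φ_k β̄_{k^{(−)}}` if `φ_k ≤ 0`. -/
def SbarG (a : I → I → ℤ) (ℓ : I → ℤ) (ι : ℤ → I) (kp km : ℤ → ℤ) (k : ℤ) (φ : Aff) :
    Aff :=
  if 0 < φ.2 k then
    ⟨φ.1 - φ.2 k * (betaBarG a ℓ ι kp k).1, φ.2 - φ.2 k • (betaBarG a ℓ ι kp k).2⟩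
  else
    ⟨φ.1 - φ.2 k * (betaBarG a ℓ ι kp (km k)).1,
     φ.2 - φ.2 k • (betaBarG a ℓ ι kp (km k)).2⟩

end

section AuxLemmas

private noncomputable def Lmap (x : ℤ →₀ ℤ) : (ℤ →₀ ℚ) →ₗ[ℚ] ℚ :=
  Finsupp.linearCombination ℚ (fun t => (x t : ℚ))

private lemma Lmap_eq (x : ℤ →₀ ℤ) (q : ℤ →₀ ℚ) :
    Lmap x q = ∑ t ∈ q.support, q t * (x t : ℚ) := by
  rw [Lmap, Finsupp.linearCombination_apply, Finsupp.sum]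
  simp [smul_eq_mul]

private lemma evalZ_sub_smul (φ β : Aff) (r : ℚ) (x : ℤ →₀ ℤ) :
    evalZ ⟨φ.1 - r * β.1, φ.2 - r • β.2⟩ x = evalZ φ x - r * evalZ β x := by
  have h : ∀ q : ℤ →₀ ℚ, ∑ t ∈ q.support, q t * (x t : ℚ) = Lmap x q :=
    fun q => (Lmap_eq x q).symm
  simp only [evalZ, h, map_sub, map_smul, smul_eq_mul]
  ring

private lemma evalZ_add_single (φ : Aff) (x : ℤ →₀ ℤ) (m : ℤ) :
    evalZ φ (x + Finsupp.single m 1) = evalZ φ x + φ.2 m := by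
  unfold evalZ
  have h : ∑ t ∈ φ.2.support, φ.2 t * (((x + Finsupp.single m 1 : ℤ →₀ ℤ) t : ℤ) : ℚ)
      = (∑ t ∈ φ.2.support, φ.2 t * (x t : ℚ))
        + ∑ t ∈ φ.2.support, (if m = t then φ.2 t else 0) := by
    rw [← Finset.sum_add_distrib]
    refine Finset.sum_congr rfl fun t _ => ?_
    rw [Finsupp.add_apply, Finsupp.single_apply]
    split_ifs <;> push_cast <;> ring
  rw [h, Finset.sum_ite_eq]
  by_cases hmem : m ∈ φ.2.support
  · rw [if_pos hmem]; ring
  · rw [if_neg hmem, Finsupp.notMem_support_iff.mp hmem]; ring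

private lemma evalZ_betaBar {I : Type*} (a : I → I → ℤ) (ha2 : ∀ p, a p p = 2)
    (ℓ : I → ℤ) (ι : ℤ → I) (kp : ℤ → ℤ) (k : ℤ)
    (h1 : k < kp k) (h2 : kp k ≠ 0) (h3 : ι (kp k) = ι k)
    (x : ℤ →₀ ℤ) :
    evalZ (betaBarG a ℓ ι kp k) x
      = ((sigmaG a ℓ ι k x - sigmaG a ℓ ι (kp k) x : ℤ) : ℚ) := by
  have happ : ∀ j, (betaBarG a ℓ ι kp k).2 j
      = (if j = k then 1 else 0) + (if j = kp k then 1 else 0)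
       + (if k < j ∧ j < kp k ∧ j ≠ 0 then (a (ι k) (ι j) : ℚ) else 0) := fun j => rfl
  have hsupp : (betaBarG a ℓ ι kp k).2.support
      ⊆ insert k (insert (kp k) (Finset.Ioo k (kp k))) := by
    intro t ht
    rw [Finsupp.mem_support_iff, happ] at ht
    by_contra hc
    simp only [Finset.mem_insert, Finset.mem_Ioo] at hc
    push_neg at hc
    obtain ⟨hc1, hc2, hc3⟩ := hc
    apply ht
    rw [if_neg hc1, if_neg hc2, if_neg (by omega)]
    ring
  have hknotin : k ∉ insert (kp k) (Finset.Ioo k (kp k)) := by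
    simp only [Finset.mem_insert, Finset.mem_Ioo]; omega
  have hKnotin : kp k ∉ Finset.Ioo k (kp k) := by
    simp only [Finset.mem_Ioo]; omega
  -- LHS
  have hLHS : evalZ (betaBarG a ℓ ι kp k) x
      = (if k ≤ -1 ∧ 1 ≤ kp k then -(ℓ (ι k) : ℚ) else 0)
        + ((x k : ℚ) + (x (kp k) : ℚ)
          + ∑ t ∈ (Finset.Ioo k (kp k)).filter (· ≠ 0), (a (ι k) (ι t) : ℚ) * (x t : ℚ)) := by
    unfold evalZ
    congr 1
    rw [Finset.sum_subset hsupp (fun t _ hnt => by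
      rw [Finsupp.notMem_support_iff.mp hnt, zero_mul])]
    rw [Finset.sum_insert hknotin, Finset.sum_insert hKnotin]
    have hfk : (betaBarG a ℓ ι kp k).2 k = 1 := by
      rw [happ, if_pos rfl, if_neg (by omega), if_neg (by omega)]; ring
    have hfK : (betaBarG a ℓ ι kp k).2 (kp k) = 1 := by
      rw [happ, if_neg (by omega), if_pos rfl, if_neg (by omega)]; ring
    have hIoo : ∑ t ∈ Finset.Ioo k (kp k), (betaBarG a ℓ ι kp k).2 t * (x t : ℚ)
        = ∑ t ∈ (Finset.Ioo k (kp k)).filter (· ≠ 0), (a (ι k) (ι t) : ℚ) * (x t : ℚ) := by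
      rw [Finset.sum_filter]
      refine Finset.sum_congr rfl fun t ht => ?_
      simp only [Finset.mem_Ioo] at ht
      rw [happ, if_neg (by omega), if_neg (by omega)]
      by_cases h0 : t = 0
      · rw [if_neg (by omega), if_neg (by simpa using h0)]; ring
      · rw [if_pos ⟨ht.1, ht.2, h0⟩, if_pos (by simpa using h0)]; ring
    rw [hfk, hfK, hIoo]; ring
  -- RHS in ℤ
  have key : sigmaG a ℓ ι k x - sigmaG a ℓ ι (kp k) x
      = (if k ≤ -1 ∧ 1 ≤ kp k then -ℓ (ι k) else 0) + x k + x (kp k)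
        + ∑ t ∈ (Finset.Ioo k (kp k)).filter (· ≠ 0), a (ι k) (ι t) * x t := by
    unfold sigmaG
    rw [h3]
    have hsub : x.support.filter (fun j => kp k < j ∧ j ≠ 0)
        ⊆ x.support.filter (fun j => k < j ∧ j ≠ 0) := by
      intro j hj
      simp only [Finset.mem_filter] at hj ⊢
      exact ⟨hj.1, by omega, hj.2.2⟩
    have hsplit : ∑ j ∈ x.support.filter (fun j => k < j ∧ j ≠ 0), a (ι k) (ι j) * x j
        = ∑ j ∈ x.support.filter (fun j => k < j ∧ j ≠ 0)
            \ x.support.filter (fun j => kp k < j ∧ j ≠ 0), a (ι k) (ι j) * x j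
          + ∑ j ∈ x.support.filter (fun j => kp k < j ∧ j ≠ 0), a (ι k) (ι j) * x j :=
      (Finset.sum_sdiff hsub).symm
    have hdiff : ∑ j ∈ x.support.filter (fun j => k < j ∧ j ≠ 0)
            \ x.support.filter (fun j => kp k < j ∧ j ≠ 0), a (ι k) (ι j) * x j
        = ∑ t ∈ (Finset.Ioc k (kp k)).filter (· ≠ 0), a (ι k) (ι t) * x t := by
      refine Finset.sum_subset ?_ ?_
      · intro j hj
        simp only [Finset.mem_sdiff, Finset.mem_filter, Finsupp.mem_support_iff,
          Finset.mem_Ioc, ne_eq, not_and, not_not] at hj ⊢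
        omega
      · intro t ht hnt
        simp only [Finset.mem_sdiff, Finset.mem_filter, Finsupp.mem_support_iff,
          Finset.mem_Ioc, ne_eq, not_and, not_not] at ht hnt
        have hx0 : x t = 0 := by omega
        rw [hx0, mul_zero]
    have hIoc : (Finset.Ioc k (kp k)).filter (· ≠ 0)
        = insert (kp k) ((Finset.Ioo k (kp k)).filter (· ≠ 0)) := by
      ext t
      simp only [Finset.mem_filter, Finset.mem_Ioc, Finset.mem_Ioo, Finset.mem_insert,
        ne_eq]
      omega
    have hKnotin2 : kp k ∉ (Finset.Ioo k (kp k)).filter (· ≠ 0) := by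
      simp only [Finset.mem_filter, Finset.mem_Ioo]; omega
    rw [hsplit, hdiff, hIoc, Finset.sum_insert hKnotin2, h3, ha2]
    split_ifs <;> omega
  rw [hLHS, key]
  push_cast
  ring

end AuxLemmas

/-- Polyhedral realization, type-free setting (Hoshino–Nakashima, Lemma 4.3,
`f̃` part).  Data: a finite index set `I`, a generalized Cartan matrix `a`,
the pairings `ℓ p = ⟨h_p, λ⟩`, a sequence `ι` (indexed by the nonzero
integers; the value `ι 0` is irrelevant) satisfying the usual conditions,
and the functions `kp`, `km` giving `k^{(+)}` and `k^{(−)}`.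
If `Ξ` is a set of affine functions on `ℤ^∞[λ]` closed under all `S̄_k`,
`Σ = {x : φ(x) ≥ 0 ∀ φ ∈ Ξ}`, `x ∈ Σ`, and `m = min M^{(p)}(x)` (for
`p = ι m`), i.e. `σ_m(x)` is the maximum of the `σ_k(x)` over `{k ≠ 0 : ι k = p}`
and `m` is the least index attaining it — so `f̃_p x ≠ 0` and
`f̃_p x = x + δ_m` — then `f̃_p x ∈ Σ`. -/
theorem sigma_stable_under_ftilde
    {I : Type*} [Fintype I] [DecidableEq I]
    (a : I → I → ℤ) (ha2 : ∀ p, a p p = 2) (haneg : ∀ p q, p ≠ q → a p q ≤ 0)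
    (hasym : ∀ p q, a p q = 0 ↔ a q p = 0)
    (ℓ : I → ℤ) (ι : ℤ → I)
    (hι₁ : ∀ k : ℤ, 1 ≤ k → ι k ≠ ι (k + 1))
    (hι₂ : ∀ k : ℤ, k ≤ -1 → ι (k - 1) ≠ ι k)
    (hιinfP : ∀ p : I, {k : ℤ | 1 ≤ k ∧ ι k = p}.Infinite)
    (hιinfN : ∀ p : I, {k : ℤ | k ≤ -1 ∧ ι k = p}.Infinite)
    (kp km : ℤ → ℤ)
    (hkp : ∀ k : ℤ, k ≠ 0 → k < kp k ∧ kp k ≠ 0 ∧ ι (kp k) = ι k ∧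
      ∀ l : ℤ, k < l → l < kp k → l ≠ 0 → ι l ≠ ι k)
    (hkm : ∀ k : ℤ, k ≠ 0 → km k < k ∧ km k ≠ 0 ∧ ι (km k) = ι k ∧
      ∀ l : ℤ, km k < l → l < k → l ≠ 0 → ι l ≠ ι k)
    (Ξ : Set Aff)
    (hΞ0 : ∀ φ ∈ Ξ, φ.2 0 = 0)
    (hΞcl : ∀ φ ∈ Ξ, ∀ k : ℤ, k ≠ 0 → SbarG a ℓ ι kp km k φ ∈ Ξ)
    (x : ℤ →₀ ℤ) (hx0 : x 0 = 0)
    (hxSig : ∀ φ ∈ Ξ, 0 ≤ evalZ φ x)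
    (m : ℤ) (hm : m ≠ 0)
    (hmax : ∀ k : ℤ, k ≠ 0 → ι k = ι m → sigmaG a ℓ ι k x ≤ sigmaG a ℓ ι m x)
    (hmin : ∀ k : ℤ, k ≠ 0 → ι k = ι m → sigmaG a ℓ ι k x = sigmaG a ℓ ι m x → m ≤ k) :
    ∀ φ ∈ Ξ, 0 ≤ evalZ φ (x + Finsupp.single m 1) := by
  intro φ hφ
  rw [evalZ_add_single]
  rcases le_or_gt 0 (φ.2 m) with hr | hr
  · have := hxSig φ hφ; linarith
  · obtain ⟨hkm1, hkm2, hkm3, hkm4⟩ := hkm m hm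
    obtain ⟨hkp1, hkp2, hkp3, hkp4⟩ := hkp (km m) hkm2
    have hkpkm : kp (km m) = m := by
      by_contra hne
      rcases lt_or_gt_of_ne hne with hlt | hgt
      · exact hkm4 (kp (km m)) hkp1 hlt hkp2 (hkp3.trans hkm3)
      · exact hkp4 m hkm1 hgt hm hkm3.symm
    have hβ : evalZ (betaBarG a ℓ ι kp (km m)) x
        = ((sigmaG a ℓ ι (km m) x - sigmaG a ℓ ι (kp (km m)) x : ℤ) : ℚ) :=
      evalZ_betaBar a ha2 ℓ ι kp (km m) hkp1 hkp2 hkp3 x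
    rw [hkpkm] at hβ
    have hlt : sigmaG a ℓ ι (km m) x < sigmaG a ℓ ι m x := by
      rcases (hmax (km m) hkm2 hkm3).lt_or_eq with h | h
      · exact h
      · exact absurd (hmin (km m) hkm2 hkm3 h) (by omega)
    have hψ := hxSig _ (hΞcl φ hφ m hm)
    rw [SbarG, if_neg (not_lt.mpr hr.le)] at hψ
    rw [evalZ_sub_smul, hβ] at hψ
    have hB : ((sigmaG a ℓ ι (km m) x - sigmaG a ℓ ι m x : ℤ) : ℚ) ≤ -1 := by
      exact_mod_cast (by omega : sigmaG a ℓ ι (km m) x - sigmaG a ℓ ι m x ≤ -1)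
    set r := φ.2 m
    set B := ((sigmaG a ℓ ι (km m) x - sigmaG a ℓ ι m x : ℤ) : ℚ)
    nlinarith [mul_nonneg (by linarith : (0:ℚ) ≤ -r) (by linarith : (0:ℚ) ≤ -(B + 1))]
end

section
/- Let x_0 be the family with (x_0)_{−j;i} = −C_{−j;i} for all j ≥ 1 and 1 ≤ i ≤ n. Then σ_{−j;i}(x_0) ≤ 0 for every j ≥ 1 and 1 ≤ i ≤ n. (Hence the vector (…,0,0,t_λ,−C_{−1;n},−C_{−1;n−1},…,−C_{−j;i},…) is a highest weight vector of the crystal ℤ^∞_ι[λ], as asserted in Theorem 5.2.) -/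
noncomputable section

/-- `C_{−j;i} = max(0, −λ_{i−j+1}, −λ_{i−j+1}−λ_{i−j+2}, …,
−λ_{i−j+1}−⋯−λ_{n−j+1})` if `1 ≤ j ≤ i ≤ n`, and `0` otherwise. -/
def CA (lam : ℤ → ℤ) (n j i : ℤ) : ℤ :=
  if 1 ≤ j ∧ j ≤ i ∧ i ≤ n then
    (Finset.Icc (i - j + 1) (n - j + 1)).fold max 0
      (fun m => -(∑ t ∈ Finset.Icc (i - j + 1) m, lam t))
  else 0

/-- The coordinate `x_{−j';i'}` of a family, with the convention that it is `0`
unless `1 ≤ i' ≤ n`. -/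
def XA (n : ℤ) (x : ℤ → ℤ → ℤ) (j' i' : ℤ) : ℤ :=
  if 1 ≤ i' ∧ i' ≤ n then x j' i' else 0

/-- `σ_{−j;i}(x) = −λ_i + x_{−j;i} − x_{−j;i+1}
+ Σ_{j'=1}^{j−1} (2 x_{−j';i} − x_{−j';i−1} − x_{−j';i+1})`;
here `x j i` denotes the coordinate `x_{−j;i}`. -/
def sigmaA (lam : ℤ → ℤ) (n : ℤ) (x : ℤ → ℤ → ℤ) (j i : ℤ) : ℤ :=
  -lam i + XA n x j i - XA n x j (i + 1) +
    ∑ j' ∈ Finset.Icc 1 (j - 1),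
      (2 * XA n x j' i - XA n x j' (i - 1) - XA n x j' (i + 1))

end

/-! Because `λ` is positive and then nonpositive, the partial sums `λ_a + ⋯ + λ_m` are unimodal
in `m`, so `C_{−j;i} = max(0, −(λ_{i−j+1} + ⋯ + λ_{n−j+1}))`. Going from `j` to `j + 1` changes
`σ_{−j;i}(x₀)` by `C_{−j−1;i+1} + C_{−j;i−1} − C_{−j−1;i} − C_{−j;i}`; the four sums involved are
`s`, `μ + s + ν`, `μ + s`, `s + ν` with `μ = λ_{i−j}`, `ν = λ_{n−j+1}`, so the change is `≤ 0` by
convexity of `x ↦ max(0, −x)`. The case `j = 1` compares two such maxima directly. -/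

open Finset

namespace Int

variable {M : Type*} [AddCommMonoid M] {a b : ℤ}

lemma sum_Icc_eq_add_sum_Icc_succ (hab : a ≤ b) (f : ℤ → M) :
    ∑ t ∈ Icc a b, f t = f a + ∑ t ∈ Icc (a + 1) b, f t := by
  rw [Icc_add_one_left_eq_Ioc, add_sum_Ioc_eq_sum_Icc hab]

lemma sum_Icc_succ_top (hab : a ≤ b + 1) (f : ℤ → M) :
    ∑ t ∈ Icc a (b + 1), f t = ∑ t ∈ Icc a b, f t + f (b + 1) := by
  rw [← sum_Ico_add_eq_sum_Icc hab, Ico_add_one_right_eq_Icc]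

end Int

def PosThenNonpos (lam : ℤ → ℤ) (n : ℤ) : Prop :=
  ∀ ⦃s t : ℤ⦄, 1 ≤ s → s ≤ t → t ≤ n → 0 < lam t → 0 < lam s

section

variable {lam : ℤ → ℤ} {n a b i j k t : ℤ} {x : ℤ → ℤ → ℤ}

lemma PosThenNonpos.nonpos_of_nonpos (hlam : PosThenNonpos lam n) (hk : 1 ≤ k) (hkt : k ≤ t)
    (htn : t ≤ n) (hlamk : lam k ≤ 0) : lam t ≤ 0 :=
  not_lt.1 fun hlamt => hlamk.not_gt (hlam hk hkt htn hlamt)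

lemma PosThenNonpos.sum_Icc_nonneg (hlam : PosThenNonpos lam n) (ha : 1 ≤ a) (hbk : b ≤ k)
    (hkn : k ≤ n) (hlamk : 0 < lam k) : 0 ≤ ∑ t ∈ Icc a b, lam t :=
  sum_nonneg fun t ht => (hlam (by grind) (by grind) hkn hlamk).le

lemma PosThenNonpos.sum_Icc_nonpos (hlam : PosThenNonpos lam n) (hk : 1 ≤ k) (hka : k ≤ a)
    (hbn : b ≤ n) (hlamk : lam k ≤ 0) : ∑ t ∈ Icc a b, lam t ≤ 0 :=
  sum_nonpos fun t ht => hlam.nonpos_of_nonpos hk (by grind) (by grind) hlamk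

/-- The partial sums from `a` rise and then fall, so the most negative one is the empty or the
full sum. -/
lemma PosThenNonpos.fold_max_neg_sum_Icc (hlam : PosThenNonpos lam n) (ha : 1 ≤ a) (hbn : b ≤ n) :
    (Icc a b).fold max 0 (fun m => -(∑ t ∈ Icc a m, lam t)) = max 0 (-∑ t ∈ Icc a b, lam t) := by
  refine le_antisymm ((fold_max_le _).2 ⟨le_max_left _ _, fun m hm => ?_⟩)
    (max_le ((le_fold_max _).2 (Or.inl le_rfl)) ?_)
  · rw [mem_Icc] at hm
    by_cases htail : ∀ t ∈ Icc (m + 1) b, lam t ≤ 0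
    · have hsub := sum_le_sum_of_subset_of_nonneg (f := fun t => -lam t)
        (Icc_subset_Icc_right (a := a) hm.2) fun t ht htm => neg_nonneg.2 (htail t (by grind))
      simp only [sum_neg_distrib] at hsub
      exact le_max_of_le_right hsub
    · push Not at htail
      obtain ⟨t, ht, hlamt⟩ := htail
      have := hlam.sum_Icc_nonneg ha (k := t) (b := m) (by grind) (by grind) hlamt
      exact le_max_of_le_left (by omega)
  · rcases le_or_gt a b with hab | hba
    · exact (le_fold_max _).2 (Or.inr ⟨b, mem_Icc.2 ⟨hab, le_rfl⟩, le_rfl⟩)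
    · simp [Icc_eq_empty_of_lt hba]

lemma CA_nonneg (lam : ℤ → ℤ) (n j i : ℤ) : 0 ≤ CA lam n j i := by
  unfold CA
  split_ifs
  exacts [(le_fold_max _).2 (Or.inl le_rfl), le_rfl]

lemma CA_of_lt (hij : i < j) : CA lam n j i = 0 :=
  if_neg (by omega)

lemma CA_succ_succ_le (lam : ℤ → ℤ) (n : ℤ) (hj : 1 ≤ j) (hji : j ≤ i) :
    CA lam n (j + 1) (i + 1) ≤ CA lam n j i := by
  rcases le_or_gt (i + 1) n with hin | hin
  · rw [CA, CA, if_pos (by omega), if_pos (by omega), show i + 1 - (j + 1) + 1 = i - j + 1 by ring,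
      show n - (j + 1) + 1 = n - j by ring]
    exact (fold_max_le _).2 ⟨(le_fold_max _).2 (Or.inl le_rfl),
      fun m hm => (le_fold_max _).2 (Or.inr ⟨m, by grind, le_rfl⟩)⟩
  · rw [CA, if_neg (by omega)]
    exact CA_nonneg lam n j i

lemma PosThenNonpos.CA_eq (hlam : PosThenNonpos lam n) (hj : 1 ≤ j) (hji : j ≤ i)
    (hin : i ≤ n + 1) : CA lam n j i = max 0 (-∑ t ∈ Icc (i - j + 1) (n - j + 1), lam t) := by
  rcases hin.lt_or_eq with hin | rfl
  · rw [CA, if_pos (by omega)]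
    exact hlam.fold_max_neg_sum_Icc (by omega) (by omega)
  · rw [CA, if_neg (by omega), Icc_eq_empty (by omega)]
    simp

lemma PosThenNonpos.CA_one_succ_le (hlam : PosThenNonpos lam n) (hi : 1 ≤ i) (hin : i ≤ n) :
    CA lam n 1 (i + 1) ≤ lam i + CA lam n 1 i := by
  rw [hlam.CA_eq le_rfl (by omega) (by omega), hlam.CA_eq le_rfl hi (by omega),
    show i + 1 - 1 + 1 = i + 1 by ring, show i - 1 + 1 = i by ring, show n - 1 + 1 = n by ring,
    Int.sum_Icc_eq_add_sum_Icc_succ hin]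
  rcases le_or_gt (lam i) 0 with hlami | hlami
  · have := hlam.sum_Icc_nonpos hi (by omega : i ≤ i + 1) le_rfl hlami
    omega
  · omega

/-- Convexity of `x ↦ max 0 (-x)`; in the two same-sign cases all four arguments lie on one
side of `0`, where it is linear. -/
lemma max_zero_neg_add_le {μ s ν : ℤ}
    (h : (μ ≤ 0 ∧ s ≤ 0 ∧ ν ≤ 0) ∨ (0 ≤ μ ∧ ν ≤ 0) ∨ (0 ≤ μ ∧ 0 ≤ s ∧ 0 ≤ ν)) :
    max 0 (-s) + max 0 (-(μ + s + ν)) ≤ max 0 (-(μ + s)) + max 0 (-(s + ν)) := by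
  omega

lemma PosThenNonpos.sign_cases (hlam : PosThenNonpos lam n) (ha : 1 ≤ a) (hab : a ≤ b)
    (hbn : b + 1 ≤ n) :
    (lam a ≤ 0 ∧ ∑ t ∈ Icc (a + 1) b, lam t ≤ 0 ∧ lam (b + 1) ≤ 0) ∨
      (0 ≤ lam a ∧ lam (b + 1) ≤ 0) ∨
      (0 ≤ lam a ∧ 0 ≤ ∑ t ∈ Icc (a + 1) b, lam t ∧ 0 ≤ lam (b + 1)) := by
  rcases le_or_gt (lam a) 0 with hμ | hμ
  · exact Or.inl ⟨hμ, hlam.sum_Icc_nonpos ha (by omega) (by omega) hμ,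
      hlam.nonpos_of_nonpos ha (by omega) hbn hμ⟩
  rcases le_or_gt (lam (b + 1)) 0 with hν | hν
  · exact Or.inr (Or.inl ⟨hμ.le, hν⟩)
  · exact Or.inr (Or.inr ⟨hμ.le, hlam.sum_Icc_nonneg (by omega) (by omega) hbn hν, hν.le⟩)

lemma PosThenNonpos.max_zero_neg_sum_Icc_add_le (hlam : PosThenNonpos lam n) (ha : 1 ≤ a)
    (hab : a ≤ b) (hbn : b + 1 ≤ n) :
    max 0 (-∑ t ∈ Icc (a + 1) b, lam t) + max 0 (-∑ t ∈ Icc a (b + 1), lam t) ≤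
      max 0 (-∑ t ∈ Icc a b, lam t) + max 0 (-∑ t ∈ Icc (a + 1) (b + 1), lam t) := by
  rw [Int.sum_Icc_eq_add_sum_Icc_succ hab, Int.sum_Icc_eq_add_sum_Icc_succ (by omega : a ≤ b + 1),
    Int.sum_Icc_succ_top (by omega : a + 1 ≤ b + 1), ← add_assoc]
  exact max_zero_neg_add_le (hlam.sign_cases ha hab hbn)

lemma PosThenNonpos.CA_succ_succ_add_CA_pred_le (hlam : PosThenNonpos lam n) (hj : 1 ≤ j)
    (hin : i ≤ n) :
    CA lam n (j + 1) (i + 1) + CA lam n j (i - 1) ≤ CA lam n (j + 1) i + CA lam n j i := by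
  rcases lt_trichotomy i j with hij | rfl | hji
  · rw [CA_of_lt (by omega), CA_of_lt (by omega)]
    linarith [CA_nonneg lam n (j + 1) i, CA_nonneg lam n j i]
  · rw [CA_of_lt (sub_one_lt i)]
    linarith [CA_succ_succ_le lam n hj le_rfl, CA_nonneg lam n (i + 1) i]
  · rw [hlam.CA_eq (by omega) (by omega) (by omega), hlam.CA_eq hj (by omega) (by omega),
      hlam.CA_eq (by omega) (by omega) (by omega), hlam.CA_eq hj (by omega) (by omega)]
    convert hlam.max_zero_neg_sum_Icc_add_le (a := i - j) (b := n - j) (by omega) (by omega)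
      (by omega) using 6 <;> ring


lemma XA_neg_CA (lam : ℤ → ℤ) (n j i : ℤ) :
    XA n (fun j' i' => -CA lam n j' i') j i = -CA lam n j i := by
  unfold XA
  split_ifs
  · rfl
  · rw [CA, if_neg (by omega), neg_zero]

lemma sigmaA_one : sigmaA lam n x 1 i = -lam i + XA n x 1 i - XA n x 1 (i + 1) := by
  simp [sigmaA]

lemma sigmaA_succ (hj : 1 ≤ j) :
    sigmaA lam n x (j + 1) i = sigmaA lam n x j i + (XA n x (j + 1) i + XA n x j i) -
      (XA n x (j + 1) (i + 1) + XA n x j (i - 1)) := by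
  rw [sigmaA, sigmaA, add_sub_cancel_right, ← sum_Ico_add_eq_sum_Icc hj,
    ← Icc_sub_one_right_eq_Ico]
  ring

end

theorem sigma_nonpos_at_minus_C_A_n_general
    (n : ℤ) (lam : ℤ → ℤ) (i0 : ℤ)
    (hpos : ∀ i : ℤ, 1 ≤ i → i ≤ i0 → 0 < lam i)
    (hneg : ∀ i : ℤ, i0 < i → i ≤ n → lam i ≤ 0) :
    ∀ j i : ℤ, 1 ≤ j → 1 ≤ i → i ≤ n →
      sigmaA lam n (fun j' i' => -CA lam n j' i') j i ≤ 0 := by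
  have hlam : PosThenNonpos lam n := fun s t hs hst htn hlamt =>
    hpos s hs (hst.trans (not_lt.1 fun hi0t => (hneg t hi0t htn).not_gt hlamt))
  intro j i hj hi hin
  induction j, hj using Int.leInduction with
  | base =>
    rw [sigmaA_one, XA_neg_CA, XA_neg_CA]
    linarith [hlam.CA_one_succ_le hi hin]
  | succ j hj ih =>
    rw [sigmaA_succ hj]
    simp only [XA_neg_CA]
    linarith [hlam.CA_succ_succ_add_CA_pred_le hj hin]

/-- Type `A_n`: for an integral weight `λ = Σ λ_i Λ_i` with
`λ_1,…,λ_{i_0} > 0` and `λ_{i_0+1},…,λ_n ≤ 0`, the vector `x₀` with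
coordinates `(x₀)_{−j;i} = −C_{−j;i}` satisfies `σ_{−j;i}(x₀) ≤ 0` for all
`j ≥ 1`, `1 ≤ i ≤ n`; hence `(…,0,0,t_λ,−C_{−1;n},…,−C_{−j;i},…)` is a
highest weight vector of `ℤ^∞_ι[λ]` (Hoshino–Nakashima, Theorem 5.2). -/
theorem sigma_nonpos_at_minus_C_A_n
    (n : ℤ) (hn : 1 ≤ n) (lam : ℤ → ℤ) (i0 : ℤ) (hi0 : 0 ≤ i0) (hi0n : i0 ≤ n)
    (hpos : ∀ i : ℤ, 1 ≤ i → i ≤ i0 → 0 < lam i)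
    (hneg : ∀ i : ℤ, i0 < i → i ≤ n → lam i ≤ 0) :
    ∀ j i : ℤ, 1 ≤ j → 1 ≤ i → i ≤ n →
      sigmaA lam n (fun j' i' => -CA lam n j' i') j i ≤ 0 :=
  sigma_nonpos_at_minus_C_A_n_general n lam i0 hpos hneg
end

section
/- Suppose x = (x_{−j;i})_{j≥1, 1≤i≤n} is a finitely supported family of integers such that for all j ≥ 1 and 1 ≤ i ≤ n one has x_{−j;i} ≤ 0, x_{−j;i} + C_{−j;i} ≥ 0, and σ_{−j;i}(x) ≤ 0. Then x_{−j;i} = −C_{−j;i} for all j ≥ 1 and 1 ≤ i ≤ n. (This is the uniqueness of the highest weight vector in Σ_ι[λ] ∩ Σ'_ι[λ], the key step proving B_0(λ) = Σ_ι[λ] ∩ Σ'_ι[λ] in Theorem 5.2.) -/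
namespace HWVAux

/-- Splitting a sum over `Icc a c` at `b`. -/
lemma sum_split (f : ℤ → ℤ) {a b c : ℤ} (h1 : a ≤ b + 1) (h2 : b ≤ c) :
    ∑ t ∈ Finset.Icc a c, f t
      = (∑ t ∈ Finset.Icc a b, f t) + ∑ t ∈ Finset.Icc (b + 1) c, f t := by
  have e1 : Finset.Icc a c = Finset.Ioc (a - 1) c := by
    ext t; simp only [Finset.mem_Icc, Finset.mem_Ioc]; omega
  have e2 : Finset.Icc a b = Finset.Ioc (a - 1) b := by
    ext t; simp only [Finset.mem_Icc, Finset.mem_Ioc]; omega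
  have e3 : Finset.Icc (b + 1) c = Finset.Ioc b c := by
    ext t; simp only [Finset.mem_Icc, Finset.mem_Ioc]; omega
  have hd : Disjoint (Finset.Ioc (a - 1) b) (Finset.Ioc b c) := by
    rw [Finset.disjoint_left]
    intro t ht1 ht2
    rw [Finset.mem_Ioc] at ht1 ht2
    omega
  rw [e1, e2, e3, ← Finset.Ioc_union_Ioc_eq_Ioc (by omega : a - 1 ≤ b) h2,
    Finset.sum_union hd]

/-- Pulling off the first element of a sum over `Icc a b`. -/
lemma sum_head (f : ℤ → ℤ) {a b : ℤ} (h : a ≤ b) :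
    ∑ t ∈ Finset.Icc a b, f t = f a + ∑ t ∈ Finset.Icc (a + 1) b, f t := by
  rw [sum_split f (by omega : a ≤ a + 1) h, Finset.Icc_self, Finset.sum_singleton]

/-- Telescoping sum over `Icc a b`. -/
lemma telescope (f : ℤ → ℤ) (a : ℤ) : ∀ b : ℤ, a - 1 ≤ b →
    (∑ t ∈ Finset.Icc a b, (f t - f (t + 1))) = f a - f (b + 1) := by
  refine Int.le_induction ?_ ?_
  · rw [Finset.Icc_eq_empty (by omega : ¬ a ≤ a - 1), Finset.sum_empty,
      show a - 1 + 1 = a by ring, sub_self]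
  · intro b hb ih
    rw [sum_split (fun t => f t - f (t + 1)) (by omega : a ≤ b + 1) (by omega : b ≤ b + 1),
      ih, Finset.Icc_self, Finset.sum_singleton]
    ring

end HWVAux

open HWVAux in
/-- Type `A_n` (uniqueness of the highest weight vector in
`Σ_ι[λ] ∩ Σ'_ι[λ]`, the key step of Hoshino–Nakashima, Theorem 5.2):
if a finitely supported family `x = (x_{−j;i})` of integers satisfies
`x_{−j;i} ≤ 0`, `x_{−j;i} + C_{−j;i} ≥ 0` and `σ_{−j;i}(x) ≤ 0` for all
`j ≥ 1`, `1 ≤ i ≤ n`, then `x_{−j;i} = −C_{−j;i}` for all such `j, i`. -/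
theorem hwv_unique_A_n
    (n : ℤ) (hn : 1 ≤ n) (lam : ℤ → ℤ) (i0 : ℤ) (hi0 : 0 ≤ i0) (hi0n : i0 ≤ n)
    (hpos : ∀ i : ℤ, 1 ≤ i → i ≤ i0 → 0 < lam i)
    (hneg : ∀ i : ℤ, i0 < i → i ≤ n → lam i ≤ 0)
    (x : ℤ → ℤ → ℤ)
    (hfin : {p : ℤ × ℤ | 1 ≤ p.1 ∧ 1 ≤ p.2 ∧ p.2 ≤ n ∧ x p.1 p.2 ≠ 0}.Finite)
    (hle : ∀ j i : ℤ, 1 ≤ j → 1 ≤ i → i ≤ n → x j i ≤ 0)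
    (hge : ∀ j i : ℤ, 1 ≤ j → 1 ≤ i → i ≤ n → 0 ≤ x j i + CA lam n j i)
    (hsig : ∀ j i : ℤ, 1 ≤ j → 1 ≤ i → i ≤ n → sigmaA lam n x j i ≤ 0) :
    ∀ j i : ℤ, 1 ≤ j → 1 ≤ i → i ≤ n → x j i = -CA lam n j i := by
  -- CA vanishes outside the admissible range
  have hCA0 : ∀ j' c : ℤ, ¬(1 ≤ j' ∧ j' ≤ c ∧ c ≤ n) → CA lam n j' c = 0 := by
    intro j' c h; unfold CA; rw [if_neg h]
  -- CA is nonnegative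
  have hCAnn : ∀ j' c : ℤ, 0 ≤ CA lam n j' c := by
    intro j' c; unfold CA
    split
    · exact (Finset.le_fold_max _).mpr (Or.inl le_rfl)
    · exact le_rfl
  -- closed form of CA:  CA = max 0 (−window sum)
  have hCAeq : ∀ j i : ℤ, 1 ≤ j → j ≤ i → i ≤ n →
      CA lam n j i = max 0 (-(∑ t ∈ Finset.Icc (i - j + 1) (n - j + 1), lam t)) := by
    intro j i hj hji hin
    unfold CA
    rw [if_pos ⟨hj, hji, hin⟩]
    apply le_antisymm
    · rw [Finset.fold_max_le]
      refine ⟨le_max_left _ _, ?_⟩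
      intro m hm
      rw [Finset.mem_Icc] at hm
      by_cases hmi0 : m ≤ i0
      · have hp : 0 < ∑ t ∈ Finset.Icc (i - j + 1) m, lam t := by
          apply Finset.sum_pos
          · intro t ht; rw [Finset.mem_Icc] at ht; exact hpos t (by omega) (by omega)
          · exact Finset.nonempty_Icc.mpr hm.1
        have := le_max_left (0 : ℤ)
          (-(∑ t ∈ Finset.Icc (i - j + 1) (n - j + 1), lam t))
        omega
      · have hsplit := sum_split lam (by omega : i - j + 1 ≤ m + 1) hm.2
        have htail : (∑ t ∈ Finset.Icc (m + 1) (n - j + 1), lam t) ≤ 0 := by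
          apply Finset.sum_nonpos
          intro t ht; rw [Finset.mem_Icc] at ht; exact hneg t (by omega) (by omega)
        have := le_max_right (0 : ℤ)
          (-(∑ t ∈ Finset.Icc (i - j + 1) (n - j + 1), lam t))
        omega
    · apply max_le
      · exact (Finset.le_fold_max _).mpr (Or.inl le_rfl)
      · refine (Finset.le_fold_max _).mpr (Or.inr ⟨n - j + 1, ?_, le_rfl⟩)
        rw [Finset.mem_Icc]; omega
  -- linearization lemma: if the row-j window at column k is negative, then all
  -- relevant CA's (row j' ≤ j, column c, window start ≥ that of (j,k)) are −window sums.
  have hlin : ∀ j k : ℤ, 1 ≤ j → j ≤ k → k ≤ n →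
      (∑ t ∈ Finset.Icc (k - j + 1) (n - j + 1), lam t) < 0 →
      ∀ j' c : ℤ, 1 ≤ j' → j' ≤ j → j' ≤ c → c ≤ n + 1 → k - j ≤ c - j' →
      CA lam n j' c = -(∑ t ∈ Finset.Icc (c - j' + 1) (n - j' + 1), lam t) := by
    intro j k hj hjk hkn hW j' c hj' hj'j hj'c hc hstart
    -- the end of the row-j window lies strictly beyond i0
    have hE : i0 < n - j + 1 := by
      by_contra h
      push_neg at h
      have : 0 < ∑ t ∈ Finset.Icc (k - j + 1) (n - j + 1), lam t := by
        apply Finset.sum_pos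
        · intro t ht; rw [Finset.mem_Icc] at ht; exact hpos t (by omega) (by omega)
        · exact Finset.nonempty_Icc.mpr (by omega)
      omega
    have hsle : (∑ t ∈ Finset.Icc (c - j' + 1) (n - j' + 1), lam t) ≤ 0 := by
      by_cases hs : c - j' + 1 ≤ i0
      · have h1 := sum_split lam (by omega : k - j + 1 ≤ (c - j') + 1)
          (by omega : c - j' ≤ n - j + 1)
        have hpref : 0 ≤ ∑ t ∈ Finset.Icc (k - j + 1) (c - j'), lam t := by
          apply Finset.sum_nonneg
          intro t ht; rw [Finset.mem_Icc] at ht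
          exact le_of_lt (hpos t (by omega) (by omega))
        have h2 := sum_split lam (by omega : c - j' + 1 ≤ (n - j + 1) + 1)
          (by omega : n - j + 1 ≤ n - j' + 1)
        have htail : (∑ t ∈ Finset.Icc ((n - j + 1) + 1) (n - j' + 1), lam t) ≤ 0 := by
          apply Finset.sum_nonpos
          intro t ht; rw [Finset.mem_Icc] at ht; exact hneg t (by omega) (by omega)
        omega
      · apply Finset.sum_nonpos
        intro t ht; rw [Finset.mem_Icc] at ht; exact hneg t (by omega) (by omega)
    by_cases hcn : c ≤ n
    · rw [hCAeq j' c hj' hj'c hcn]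
      exact max_eq_right (by omega)
    · have hc' : c = n + 1 := by omega
      rw [hCA0 j' c (by omega), hc',
        Finset.Icc_eq_empty (by omega : ¬ (n + 1 - j' + 1 ≤ n - j' + 1)),
        Finset.sum_empty, neg_zero]
  -- main induction on the row index
  have key : ∀ m : ℕ, ∀ j : ℤ, 1 ≤ j → j ≤ (m : ℤ) →
      ∀ i : ℤ, 1 ≤ i → i ≤ n → x j i = -CA lam n j i := by
    intro m
    induction m with
    | zero => intro j hj hjm; omega
    | succ m ih =>
      intro j hj hjm i hi hin
      by_cases hjm' : j ≤ (m : ℤ)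
      · exact ih j hj hjm' i hi hin
      -- rows below j are already known
      have hXA : ∀ j' c : ℤ, 1 ≤ j' → j' ≤ j - 1 → XA n x j' c = -CA lam n j' c := by
        intro j' c h1 h2
        unfold XA
        by_cases hc : 1 ≤ c ∧ c ≤ n
        · rw [if_pos hc]
          exact ih j' h1 (by push_cast at hjm ⊢; omega) c hc.1 hc.2
        · rw [if_neg hc, hCA0 j' c (by omega)]; ring
      by_cases hCpos : 0 < CA lam n j i
      · -- CA j i > 0 : the window sum is negative
        have hcond : 1 ≤ j ∧ j ≤ i ∧ i ≤ n := by
          by_contra h; rw [hCA0 j i h] at hCpos; omega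
        have hCval := hCAeq j i hcond.1 hcond.2.1 hcond.2.2
        have hW : (∑ t ∈ Finset.Icc (i - j + 1) (n - j + 1), lam t) < 0 := by
          rw [hCval] at hCpos
          rcases lt_max_iff.mp hCpos with h | h
          · omega
          · omega
        have hmax : max (0 : ℤ) (-(∑ t ∈ Finset.Icc (i - j + 1) (n - j + 1), lam t))
            = -(∑ t ∈ Finset.Icc (i - j + 1) (n - j + 1), lam t) :=
          max_eq_right (by omega)
        -- chain of sigma inequalities, downward in the column index
        have hchain : ∀ d : ℕ, ∀ c : ℤ, c = n + 1 - (d : ℤ) → i ≤ c →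
            XA n x j c ≤ ∑ t ∈ Finset.Icc (c - j + 1) (n - j + 1), lam t := by
          intro d
          induction d with
          | zero =>
            intro c hc hic
            have hc' : c = n + 1 := by push_cast at hc; omega
            unfold XA
            rw [if_neg (by omega), hc',
              Finset.Icc_eq_empty (by omega : ¬ (n + 1 - j + 1 ≤ n - j + 1)),
              Finset.sum_empty]
          | succ d ihd =>
            intro c hc hic
            have hcn : c ≤ n := by push_cast at hc; omega
            have hc1 : 1 ≤ c := by omega
            have hs := hsig j c hcond.1 hc1 hcn
            unfold sigmaA at hs
            -- rewrite the sum over previous rows as a telescoping sum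
            have hsum : (∑ j' ∈ Finset.Icc 1 (j - 1),
                (2 * XA n x j' c - XA n x j' (c - 1) - XA n x j' (c + 1)))
                = lam c - lam (c - j + 1) := by
              have hterm : ∀ j' ∈ Finset.Icc 1 (j - 1),
                  (2 * XA n x j' c - XA n x j' (c - 1) - XA n x j' (c + 1))
                    = lam (c - j' + 1) - lam (c - (j' + 1) + 1) := by
                intro j' hj'
                rw [Finset.mem_Icc] at hj'
                rw [hXA j' c hj'.1 hj'.2, hXA j' (c - 1) hj'.1 hj'.2,
                  hXA j' (c + 1) hj'.1 hj'.2]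
                rw [hlin j i hcond.1 hcond.2.1 hcond.2.2 hW j' c hj'.1 (by omega)
                    (by omega) (by omega) (by omega),
                  hlin j i hcond.1 hcond.2.1 hcond.2.2 hW j' (c - 1) hj'.1 (by omega)
                    (by omega) (by omega) (by omega),
                  hlin j i hcond.1 hcond.2.1 hcond.2.2 hW j' (c + 1) hj'.1 (by omega)
                    (by omega) (by omega) (by omega)]
                rw [show c - 1 - j' + 1 = c - j' by ring,
                  show c + 1 - j' + 1 = c - j' + 2 by ring,
                  show c - (j' + 1) + 1 = c - j' by ring]
                have e1 := sum_head lam (by omega : c - j' ≤ n - j' + 1)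
                have e2 := sum_head lam (by omega : c - j' + 1 ≤ n - j' + 1)
                rw [show c - j' + 1 + 1 = c - j' + 2 by ring] at e2
                linarith [e1, e2]
              have htel : (∑ t ∈ Finset.Icc 1 (j - 1),
                  (lam (c - t + 1) - lam (c - (t + 1) + 1)))
                  = lam (c - 1 + 1) - lam (c - (j - 1 + 1) + 1) :=
                telescope (fun t => lam (c - t + 1)) 1 (j - 1) (by omega)
              rw [show c - 1 + 1 = c by ring,
                show c - (j - 1 + 1) + 1 = c - j + 1 by ring] at htel
              rw [Finset.sum_congr rfl hterm, htel]
            rw [hsum] at hs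
            have hnext := ihd (c + 1) (by push_cast at hc ⊢; omega) (by omega)
            rw [show c + 1 - j + 1 = c - j + 1 + 1 by ring] at hnext
            have esplit := sum_head lam (by omega : c - j + 1 ≤ n - j + 1)
            have hXAc : XA n x j c = x j c := if_pos ⟨hc1, hcn⟩
            rw [hXAc] at hs ⊢
            linarith [hs, hnext, esplit]
        -- evaluate the chain at the column i itself
        have hfi := hchain (n + 1 - i).toNat i
          (by rw [Int.toNat_of_nonneg (by omega)]; ring) le_rfl
        have hXAi : XA n x j i = x j i := if_pos ⟨hi, hin⟩
        rw [hXAi] at hfi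
        have hgei := hge j i hcond.1 hi hin
        rw [hCval] at hgei ⊢
        omega
      · -- CA j i = 0 : then x j i = 0
        have h0 : CA lam n j i = 0 := le_antisymm (by omega) (hCAnn j i)
        have h1 := hle j i hj hi hin
        have h2 := hge j i hj hi hin
        rw [h0] at h2 ⊢
        omega
  intro j i hj hi hin
  exact key j.toNat j hj (Int.self_le_toNat j) i hi hin
end

section
/- For 1 ≤ j ≤ i ≤ n and any i-admissible partition μ, the constant term of φ^{(μ)}_{−j;i} is φ^{(μ)}_{−j;i}(0) = λ_{i−j+1} + λ_{i−j+2} + ⋯ + λ_{i−j+μ_j} (an empty sum, equal to 0, when μ_j = 0). -/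
noncomputable section

/-- Position `(b;c) ↦ (b−1)n+c` for a positive block index `b ≥ 1`, and
`(b;c) ↦ bn+c−1` for a negative block index `b ≤ −1`. -/
def posIdx (n b c : ℤ) : ℤ := if 0 < b then (b - 1) * n + c else b * n + c - 1

/-- The sequence `ι = (…,2,1,n,…,2,1,t_λ,n,n−1,…,1,n,n−1,…)` of type `A_n`:
`i_{(j−1)n+i} = i` and `i_{−jn+i−1} = i` for `j ≥ 1`, `1 ≤ i ≤ n`. -/
def iseqA (n k : ℤ) : ℤ := if 0 < k then (k - 1) % n + 1 else k % n + 1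

/-- The Cartan matrix of type `A_n`. -/
def aA (p q : ℤ) : ℤ := if p = q then 2 else if p = q + 1 ∨ q = p + 1 then -1 else 0

/-- `k^{(+)}` for the type `A_n` sequence. -/
def kpA (n k : ℤ) : ℤ := if -n ≤ k ∧ k ≤ -1 then k + n + 1 else k + n

/-- `k^{(−)}` for the type `A_n` sequence. -/
def kmA (n k : ℤ) : ℤ := if 1 ≤ k ∧ k ≤ n then k - n - 1 else k - n

/-- The operator `S̄` at position `k` for the type `A_n` sequence and weight
coefficients `lam i = λ_i`. -/
def SbarA (n : ℤ) (lam : ℤ → ℤ) (k : ℤ) (φ : Aff) : Aff :=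
  SbarG aA lam (iseqA n) (kpA n) (kmA n) k φ

/-- The generator `x_{−j;i} + C_{−j;i}` of `Ξ'_ι[λ]`, as an affine function. -/
def genA (n : ℤ) (lam : ℤ → ℤ) (j i : ℤ) : Aff :=
  ⟨(CA lam n j i : ℚ), Finsupp.single (posIdx n (-j) i) 1⟩

/-- `Ξ'_ι[λ] = { S̄_{−j_l} ⋯ S̄_{−j_1}(x_{−j;i} + C_{−j;i}) :
l ≥ 0, j ≥ 1, 1 ≤ i ≤ n, j_1,…,j_l ≥ 1 }` for type `A_n`. -/
def XiPrimeA (n : ℤ) (lam : ℤ → ℤ) : Set Aff :=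
  { φ | ∃ js : List ℤ, (∀ m ∈ js, 1 ≤ m) ∧ ∃ j i : ℤ, 1 ≤ j ∧ 1 ≤ i ∧ i ≤ n ∧
      φ = js.foldl (fun ψ m => SbarA n lam (-m) ψ) (genA n lam j i) }

/-- `S̄^{(l)}_{b;c} = S̄_{b;c+l−1} ⋯ S̄_{b;c+1} S̄_{b;c}` (the identity for
`l = 0`), where `S̄_{b;c}` is `S̄` at the position `(b;c)`. -/
def SbarPowA (n : ℤ) (lam : ℤ → ℤ) (b c : ℤ) : ℕ → Aff → Aff
  | 0, φ => φ
  | l + 1, φ => SbarA n lam (posIdx n b (c + l)) (SbarPowA n lam b c l φ)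

/-- `μ = (μ_1,…,μ_i)` is an `i`-admissible partition:
`n−i+1 ≥ μ_1 ≥ μ_2 ≥ ⋯ ≥ μ_i ≥ 0`. -/
def admissibleA (n i : ℤ) (μ : ℤ → ℤ) : Prop :=
  μ 1 ≤ n - i + 1 ∧ (∀ k : ℤ, 1 ≤ k → k < i → μ (k + 1) ≤ μ k) ∧ 0 ≤ μ i

/-- `φ^{(μ)}_{−j;i} = S̄^{(μ_i)}_{b_i;1} S̄^{(μ_{i−1})}_{b_{i−1};2} ⋯
S̄^{(μ_1)}_{b_1;i} (x_{−j;i})`, where `b_k = −j+k−1` for `1 ≤ k ≤ j` and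
`b_k = k−j` for `k > j`. -/
def phiMuA (n : ℤ) (lam : ℤ → ℤ) (j i : ℤ) (μ : ℤ → ℤ) : Aff :=
  (List.range i.toNat).foldl
    (fun ψ k0 =>
      SbarPowA n lam
        (if ((k0 : ℤ) + 1) ≤ j then -j + ((k0 : ℤ) + 1) - 1 else ((k0 : ℤ) + 1) - j)
        (i - ((k0 : ℤ) + 1) + 1) (μ ((k0 : ℤ) + 1)).toNat ψ)
    ⟨0, Finsupp.single (posIdx n (-j) i) 1⟩

/-- `θ(t) = 1` for `t ≥ 0` and `θ(t) = 0` for `t < 0`. -/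
def theta (t : ℤ) : ℤ := if 0 ≤ t then 1 else 0

/-- The coordinate `x_{b;c}` of `x`, with the convention that it is `0`
unless `1 ≤ c ≤ n`. -/
def XcA (n : ℤ) (x : ℤ → ℚ) (b c : ℤ) : ℚ :=
  if 1 ≤ c ∧ c ≤ n then x (posIdx n b c) else 0

end

section AuxBasic

/-- Successor block: `-1` is followed by `1`. -/
def succb (b : ℤ) : ℤ := if b = -1 then 1 else b + 1

lemma succb_cases (b : ℤ) : (b = -1 ∧ succb b = 1) ∨ (b ≠ -1 ∧ succb b = b + 1) := by
  unfold succb; split <;> simp_all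

lemma succb_ne_zero {b : ℤ} (hb : b ≠ 0) : succb b ≠ 0 := by
  rcases succb_cases b with ⟨h1, h2⟩ | ⟨h1, h2⟩ <;> omega

lemma lt_succb {b : ℤ} : b < succb b := by
  rcases succb_cases b with ⟨h1, h2⟩ | ⟨h1, h2⟩ <;> omega

lemma succb_gap {b x : ℤ} (hx : x ≠ 0) (h1 : b < x) (h2 : x < succb b) : False := by
  rcases succb_cases b with ⟨hb, hs⟩ | ⟨hb, hs⟩ <;> omega

variable {n : ℤ}

lemma posIdx_pos (hn : 1 ≤ n) {b c : ℤ} (hb : 1 ≤ b) (hc : 1 ≤ c) : 1 ≤ posIdx n b c := by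
  unfold posIdx
  rw [if_pos (by omega : (0:ℤ) < b)]
  nlinarith [mul_nonneg (show (0:ℤ) ≤ b - 1 by omega) (show (0:ℤ) ≤ n by omega)]

lemma posIdx_neg (hn : 1 ≤ n) {b c : ℤ} (hb : b ≤ -1) (hc : c ≤ n) : posIdx n b c ≤ -1 := by
  unfold posIdx
  rw [if_neg (by omega : ¬ (0:ℤ) < b)]
  nlinarith [mul_le_mul_of_nonneg_right (show b ≤ -1 by omega) (show (0:ℤ) ≤ n by omega)]

lemma posIdx_ne_zero (hn : 1 ≤ n) {b c : ℤ} (hb : b ≠ 0) (h1 : 1 ≤ c) (h2 : c ≤ n) :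
    posIdx n b c ≠ 0 := by
  rcases lt_or_ge 0 b with h | h
  · have := posIdx_pos hn (by omega : 1 ≤ b) h1; omega
  · have := posIdx_neg hn (by omega : b ≤ -1) h2; omega

lemma posIdx_mono (hn : 1 ≤ n) {b c b' c' : ℤ} (hbb : b < b') (hb : b ≠ 0) (hb' : b' ≠ 0)
    (hc : c ≤ n) (hc' : 1 ≤ c') : posIdx n b c < posIdx n b' c' := by
  unfold posIdx
  split_ifs with h1 h2 h2
  · nlinarith [mul_nonneg (show (0:ℤ) ≤ b' - b - 1 by omega) (show (0:ℤ) ≤ n by omega)]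
  · omega
  · nlinarith [mul_le_mul_of_nonneg_right (show b ≤ -1 by omega) (show (0:ℤ) ≤ n by omega),
      mul_nonneg (show (0:ℤ) ≤ b' - 1 by omega) (show (0:ℤ) ≤ n by omega)]
  · nlinarith [mul_nonneg (show (0:ℤ) ≤ b' - b - 1 by omega) (show (0:ℤ) ≤ n by omega)]

lemma posIdx_lt_iff (hn : 1 ≤ n) {b c b' c' : ℤ} (hb : b ≠ 0) (hb' : b' ≠ 0)
    (h1 : 1 ≤ c) (h2 : c ≤ n) (h1' : 1 ≤ c') (h2' : c' ≤ n) :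
    posIdx n b c < posIdx n b' c' ↔ (b < b' ∨ (b = b' ∧ c < c')) := by
  constructor
  · intro h
    rcases lt_trichotomy b b' with h' | h' | h'
    · exact Or.inl h'
    · subst h'
      right
      refine ⟨rfl, ?_⟩
      unfold posIdx at h
      split_ifs at h <;> linarith
    · exact absurd h (not_lt.mpr (le_of_lt (posIdx_mono hn h' hb' hb h2' h1)))
  · rintro (h | ⟨rfl, h⟩)
    · exact posIdx_mono hn h hb hb' h2 h1'
    · unfold posIdx; split_ifs <;> linarith

lemma posIdx_eq_iff (hn : 1 ≤ n) {b c b' c' : ℤ} (hb : b ≠ 0) (hb' : b' ≠ 0)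
    (h1 : 1 ≤ c) (h2 : c ≤ n) (h1' : 1 ≤ c') (h2' : c' ≤ n) :
    posIdx n b c = posIdx n b' c' ↔ (b = b' ∧ c = c') := by
  constructor
  · intro h
    rcases lt_trichotomy b b' with h' | h' | h'
    · have := posIdx_mono hn h' hb hb' h2 h1'; omega
    · subst h'
      refine ⟨rfl, ?_⟩
      unfold posIdx at h
      split_ifs at h <;> linarith
    · have := posIdx_mono hn h' hb' hb h2' h1; omega
  · rintro ⟨rfl, rfl⟩; rfl

lemma exists_posIdx (hn : 1 ≤ n) {t : ℤ} (ht : t ≠ 0) :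
    ∃ b c : ℤ, b ≠ 0 ∧ 1 ≤ c ∧ c ≤ n ∧ t = posIdx n b c := by
  rcases lt_or_ge 0 t with h | h
  · refine ⟨(t - 1) / n + 1, (t - 1) % n + 1, ?_, ?_, ?_, ?_⟩
    · have := Int.ediv_nonneg (show (0:ℤ) ≤ t - 1 by omega) (show (0:ℤ) ≤ n by omega)
      omega
    · have := Int.emod_nonneg (t - 1) (show n ≠ 0 by omega); omega
    · have := Int.emod_lt_of_pos (t - 1) (show (0:ℤ) < n by omega); omega
    · have hd := Int.mul_ediv_add_emod (t - 1) n
      have h0 : 0 ≤ (t - 1) / n := Int.ediv_nonneg (by omega) (by omega)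
      unfold posIdx
      rw [if_pos (by omega : (0:ℤ) < (t - 1) / n + 1)]
      linarith [hd]
  · refine ⟨t / n, t % n + 1, ?_, ?_, ?_, ?_⟩
    · have hd := Int.mul_ediv_add_emod t n
      have := Int.emod_nonneg t (show n ≠ 0 by omega)
      intro h0
      rw [h0] at hd
      simp at hd
      omega
    · have := Int.emod_nonneg t (show n ≠ 0 by omega); omega
    · have := Int.emod_lt_of_pos t (show (0:ℤ) < n by omega); omega
    · have hd := Int.mul_ediv_add_emod t n
      have hq : t / n ≤ -1 := by
        by_contra h0
        push_neg at h0
        have : 0 ≤ n * (t / n) := mul_nonneg (by omega) (by omega)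
        have := Int.emod_nonneg t (show n ≠ 0 by omega)
        omega
      unfold posIdx
      rw [if_neg (by omega : ¬ (0:ℤ) < t / n)]
      linarith [hd]

lemma iseqA_posIdx (hn : 1 ≤ n) {b c : ℤ} (hb : b ≠ 0) (h1 : 1 ≤ c) (h2 : c ≤ n) :
    iseqA n (posIdx n b c) = c := by
  unfold iseqA posIdx
  rcases lt_or_ge 0 b with h | h
  · have h0 : (0:ℤ) ≤ (b - 1) * n := mul_nonneg (by omega) (by omega)
    have hp : (0:ℤ) < (b - 1) * n + c := by omega
    rw [if_pos h, if_pos hp]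
    have e : (b - 1) * n + c - 1 = (c - 1) + n * (b - 1) := by ring
    rw [e, Int.add_mul_emod_self_left, Int.emod_eq_of_lt (by omega) (by omega)]
    ring
  · have h0 : b * n ≤ -1 * n := mul_le_mul_of_nonneg_right (by omega) (by omega)
    have hp : ¬ (0:ℤ) < b * n + c - 1 := by omega
    rw [if_neg (by omega : ¬ (0:ℤ) < b), if_neg hp]
    have e : b * n + c - 1 = (c - 1) + n * b := by ring
    rw [e, Int.add_mul_emod_self_left, Int.emod_eq_of_lt (by omega) (by omega)]
    ring

lemma kpA_posIdx (hn : 1 ≤ n) {b c : ℤ} (hb : b ≠ 0) (h1 : 1 ≤ c) (h2 : c ≤ n) :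
    kpA n (posIdx n b c) = posIdx n (succb b) c := by
  unfold kpA
  rcases succb_cases b with ⟨hb1, hs⟩ | ⟨hb1, hs⟩
  · subst hb1
    have e : posIdx n (-1) c = -n + c - 1 := by
      unfold posIdx; rw [if_neg (by omega)]; ring
    rw [e, if_pos (by omega), hs]
    unfold posIdx; rw [if_pos (by omega)]; ring
  · rcases lt_or_ge 0 b with h | h
    · have e : posIdx n b c = (b - 1) * n + c := by
        unfold posIdx; rw [if_pos h]
      have hp : 1 ≤ posIdx n b c := posIdx_pos hn (by omega) h1
      rw [e, if_neg (by rw [← e]; omega), hs]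
      unfold posIdx
      rw [if_pos (by omega)]
      ring
    · have hb2 : b ≤ -2 := by omega
      have e : posIdx n b c = b * n + c - 1 := by
        unfold posIdx; rw [if_neg (by omega)]
      have hsm : b * n ≤ -2 * n :=
        mul_le_mul_of_nonneg_right (show b ≤ -2 by omega) (by omega)
      rw [e, if_neg (by omega), hs]
      unfold posIdx
      rw [if_neg (by omega)]
      ring

end AuxBasic
section AuxBeta

variable {n : ℤ}

lemma ite_single_apply_ne {p : Prop} [Decidable p] {x t : ℤ} (h : x ≠ t) :
    (if p then Finsupp.single x (1:ℚ) else 0) t = 0 := by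
  split_ifs <;> simp [Finsupp.single_apply, h]

lemma ite_single_apply_pos {p : Prop} [Decidable p] {x t : ℤ} (hp : p) (h : x = t) :
    (if p then Finsupp.single x (1:ℚ) else 0) t = 1 := by
  rw [if_pos hp, h, Finsupp.single_apply, if_pos rfl]

lemma succb_neg_one : succb (-1) = 1 := by simp [succb]

lemma betaBar_eval (hn : 1 ≤ n) (lam : ℤ → ℤ) {b c : ℤ} (hb : b ≠ 0)
    (h1 : 1 ≤ c) (h2 : c ≤ n) :
    betaBarG aA lam (iseqA n) (kpA n) (posIdx n b c) =
      ⟨if b = -1 then -(lam c : ℚ) else 0,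
       Finsupp.single (posIdx n b c) 1 + Finsupp.single (posIdx n (succb b) c) 1
         - (if c + 1 ≤ n then Finsupp.single (posIdx n b (c + 1)) 1 else 0)
         - (if 2 ≤ c then Finsupp.single (posIdx n (succb b) (c - 1)) 1 else 0)⟩ := by
  have hsb : b < succb b := lt_succb
  have hs0 : succb b ≠ 0 := succb_ne_zero hb
  have hsne : succb b ≠ b := by omega
  have hkp : kpA n (posIdx n b c) = posIdx n (succb b) c := kpA_posIdx hn hb h1 h2
  have hik : iseqA n (posIdx n b c) = c := iseqA_posIdx hn hb h1 h2
  unfold betaBarG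
  refine Prod.ext ?_ ?_
  · -- constant terms
    dsimp only
    rw [hkp, hik]
    rcases lt_trichotomy b (-1) with hbb | hbb | hbb
    · have hsn : succb b ≤ -1 := by
        rcases succb_cases b with ⟨u,v⟩|⟨u,v⟩ <;> omega
      have h5 := posIdx_neg hn hsn h2
      rw [if_neg (by omega), if_neg (by omega : ¬ b = -1)]
    · subst hbb
      rw [if_pos ⟨posIdx_neg hn (by omega) h2, by
        rw [succb_neg_one]; exact posIdx_pos hn (by omega) h1⟩, if_pos rfl]
    · have h5 := posIdx_pos hn (by omega : 1 ≤ b) h1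
      rw [if_neg (by omega), if_neg (by omega : ¬ b = -1)]
  · dsimp only
    ext t
    rw [Finsupp.onFinset_apply]
    simp only [Finsupp.sub_apply, Finsupp.add_apply, Finsupp.single_apply]
    rw [hkp, hik]
    by_cases ht : t = 0
    · subst ht
      have z1 : ((if c + 1 ≤ n then Finsupp.single (posIdx n b (c+1)) (1:ℚ) else 0) : ℤ →₀ ℚ) 0 = 0 := by
        split_ifs with g
        · rw [Finsupp.single_apply, if_neg (posIdx_ne_zero hn hb (by omega) g)]
        · rfl
      have z2 : ((if 2 ≤ c then Finsupp.single (posIdx n (succb b) (c-1)) (1:ℚ) else 0) : ℤ →₀ ℚ) 0 = 0 := by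
        split_ifs with g
        · rw [Finsupp.single_apply, if_neg (posIdx_ne_zero hn hs0 (by omega) (by omega))]
        · rfl
      rw [z1, z2,
        if_neg (show ¬ (0 : ℤ) = posIdx n b c from fun h => posIdx_ne_zero hn hb h1 h2 h.symm),
        if_neg (show ¬ (0 : ℤ) = posIdx n (succb b) c from fun h => posIdx_ne_zero hn hs0 h1 h2 h.symm),
        if_neg (show ¬ (posIdx n b c < 0 ∧ (0:ℤ) < posIdx n (succb b) c ∧ (0:ℤ) ≠ 0) from
          fun h => h.2.2 rfl),
        if_neg (posIdx_ne_zero hn hb h1 h2),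
        if_neg (posIdx_ne_zero hn hs0 h1 h2)]
      norm_num
    · obtain ⟨b', c', hb', h1', h2', rfl⟩ := exists_posIdx hn ht
      rw [iseqA_posIdx hn hb' h1' h2']
      have z1ne : ∀ c₀ : ℤ, 1 ≤ c₀ → c₀ ≤ n + 1 → ¬ (b = b' ∧ c₀ = c') →
          ((if c₀ ≤ n then Finsupp.single (posIdx n b c₀) (1:ℚ) else 0) : ℤ →₀ ℚ)
            (posIdx n b' c') = 0 := by
        intro c₀ hc1 hc2 hcon
        split_ifs with g
        · rw [Finsupp.single_apply,
            if_neg (fun h => hcon ((posIdx_eq_iff hn hb hb' hc1 g h1' h2').mp h))]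
        · rfl
      have z2ne : ¬ (succb b = b' ∧ c - 1 = c') →
          ((if 2 ≤ c then Finsupp.single (posIdx n (succb b) (c-1)) (1:ℚ) else 0) : ℤ →₀ ℚ)
            (posIdx n b' c') = 0 := by
        intro hcon
        split_ifs with g
        · rw [Finsupp.single_apply,
            if_neg (fun h => hcon ((posIdx_eq_iff hn hs0 hb' (by omega) (by omega) h1' h2').mp h))]
        · rfl
      have e1 : (posIdx n b' c' = posIdx n b c) ↔ (b' = b ∧ c' = c) :=
        posIdx_eq_iff hn hb' hb h1' h2' h1 h2
      have e2 : (posIdx n b' c' = posIdx n (succb b) c) ↔ (b' = succb b ∧ c' = c) :=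
        posIdx_eq_iff hn hb' hs0 h1' h2' h1 h2
      have e3 : (posIdx n b c = posIdx n b' c') ↔ (b = b' ∧ c = c') :=
        posIdx_eq_iff hn hb hb' h1 h2 h1' h2'
      have e4 : (posIdx n (succb b) c = posIdx n b' c') ↔ (succb b = b' ∧ c = c') :=
        posIdx_eq_iff hn hs0 hb' h1 h2 h1' h2'
      have l1 : (posIdx n b c < posIdx n b' c') ↔ (b < b' ∨ (b = b' ∧ c < c')) :=
        posIdx_lt_iff hn hb hb' h1 h2 h1' h2'
      have l2 : (posIdx n b' c' < posIdx n (succb b) c) ↔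
          (b' < succb b ∨ (b' = succb b ∧ c' < c)) :=
        posIdx_lt_iff hn hb' hs0 h1' h2' h1 h2
      -- the two guarded single terms, rewritten to guards on coordinates
      by_cases hbb' : b' = b
      · subst hbb'
        rw [if_neg (show ¬ posIdx n b' c' = posIdx n (succb b') c from
            fun h => by rw [e2] at h; omega),
          if_neg (show ¬ posIdx n (succb b') c = posIdx n b' c' from
            fun h => by rw [e4] at h; omega),
          z2ne (by omega)]
        by_cases hcc : c' = c
        · subst hcc
          rw [if_pos rfl,
            if_neg (show ¬ (posIdx n b' c' < posIdx n b' c' ∧ posIdx n b' c' <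
              posIdx n (succb b') c' ∧ posIdx n b' c' ≠ 0) from fun h => lt_irrefl _ h.1),
            z1ne (c' + 1) (by omega) (by omega) (by omega)]
          norm_num
        · rw [if_neg (show ¬ posIdx n b' c' = posIdx n b' c from
              fun h => by rw [e1] at h; omega),
            if_neg (show ¬ posIdx n b' c = posIdx n b' c' from
              fun h => by rw [e3] at h; omega)]
          by_cases hlt : c < c'
          · rw [if_pos (show posIdx n b' c < posIdx n b' c' ∧ posIdx n b' c' <
                posIdx n (succb b') c ∧ posIdx n b' c' ≠ 0 from
                ⟨l1.mpr (Or.inr ⟨rfl, hlt⟩), l2.mpr (Or.inl hsb), ht⟩)]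
            by_cases he : c' = c + 1
            · rw [show aA c c' = -1 from by
                  unfold aA; rw [if_neg (by omega), if_pos (by omega)],
                if_pos (show c + 1 ≤ n by omega), Finsupp.single_apply,
                if_pos (show posIdx n b' (c+1) = posIdx n b' c' by rw [he])]
              norm_num
            · rw [show aA c c' = 0 from by
                  unfold aA; rw [if_neg (by omega), if_neg (by omega)],
                z1ne (c + 1) (by omega) (by omega) (by omega)]
              norm_num
          · rw [if_neg (show ¬ (posIdx n b' c < posIdx n b' c' ∧ posIdx n b' c' <
                posIdx n (succb b') c ∧ posIdx n b' c' ≠ 0) from fun h => by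
                  have := l1.mp h.1; omega),
              z1ne (c + 1) (by omega) (by omega) (by omega)]
            norm_num
      · by_cases hbs : b' = succb b
        · rw [if_neg (show ¬ posIdx n b' c' = posIdx n b c from
              fun h => by rw [e1] at h; omega),
            if_neg (show ¬ posIdx n b c = posIdx n b' c' from
              fun h => by rw [e3] at h; omega),
            z1ne (c + 1) (by omega) (by omega) (by omega)]
          by_cases hcc : c' = c
          · rw [if_pos (show posIdx n b' c' = posIdx n (succb b) c from by
                rw [e2]; exact ⟨hbs, hcc⟩),
              if_pos (show posIdx n (succb b) c = posIdx n b' c' from by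
                rw [e4]; exact ⟨hbs.symm, hcc.symm⟩),
              if_neg (show ¬ (posIdx n b c < posIdx n b' c' ∧ posIdx n b' c' <
                posIdx n (succb b) c ∧ posIdx n b' c' ≠ 0) from fun h => by
                  have := l2.mp h.2.1; omega),
              z2ne (by omega)]
            norm_num
          · rw [if_neg (show ¬ posIdx n b' c' = posIdx n (succb b) c from
                fun h => by rw [e2] at h; omega),
              if_neg (show ¬ posIdx n (succb b) c = posIdx n b' c' from
                fun h => by rw [e4] at h; omega)]
            by_cases hlt : c' < c
            · rw [if_pos (show posIdx n b c < posIdx n b' c' ∧ posIdx n b' c' <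
                  posIdx n (succb b) c ∧ posIdx n b' c' ≠ 0 from
                  ⟨l1.mpr (Or.inl (by omega)), l2.mpr (Or.inr ⟨hbs, hlt⟩), ht⟩)]
              by_cases he : c' = c - 1
              · rw [show aA c c' = -1 from by
                    unfold aA; rw [if_neg (by omega), if_pos (by omega)],
                  if_pos (show 2 ≤ c by omega), Finsupp.single_apply,
                  if_pos (show posIdx n (succb b) (c-1) = posIdx n b' c' from by
                    rw [posIdx_eq_iff hn hs0 hb' (by omega) (by omega) h1' h2']
                    exact ⟨hbs.symm, by omega⟩)]
                norm_num
              · rw [show aA c c' = 0 from by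
                    unfold aA; rw [if_neg (by omega), if_neg (by omega)],
                  z2ne (by omega)]
                norm_num
            · rw [if_neg (show ¬ (posIdx n b c < posIdx n b' c' ∧ posIdx n b' c' <
                  posIdx n (succb b) c ∧ posIdx n b' c' ≠ 0) from fun h => by
                    have := l2.mp h.2.1; omega),
                z2ne (by omega)]
              norm_num
        · rw [if_neg (show ¬ posIdx n b' c' = posIdx n b c from
              fun h => by rw [e1] at h; omega),
            if_neg (show ¬ posIdx n b' c' = posIdx n (succb b) c from
              fun h => by rw [e2] at h; exact hbs h.1),
            if_neg (show ¬ (posIdx n b c < posIdx n b' c' ∧ posIdx n b' c' <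
              posIdx n (succb b) c ∧ posIdx n b' c' ≠ 0) from fun h => by
                have hA := l1.mp h.1
                have hB := l2.mp h.2.1
                exact succb_gap (b := b) hb' (by omega) (by omega)),
            if_neg (show ¬ posIdx n b c = posIdx n b' c' from
              fun h => by rw [e3] at h; omega),
            if_neg (show ¬ posIdx n (succb b) c = posIdx n b' c' from
              fun h => by rw [e4] at h; exact hbs h.1.symm),
            z1ne (c + 1) (by omega) (by omega) (by omega),
            z2ne (by omega)]
          norm_num
end AuxBeta
section AuxPow

variable {n : ℤ}

lemma ite_single_apply_ne' {p : Prop} [Decidable p] {x t : ℤ} (h : p → x ≠ t) :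
    (if p then Finsupp.single x (1:ℚ) else 0) t = 0 := by
  split_ifs with g
  · simp [Finsupp.single_apply, h g]
  · rfl


lemma sum_Icc_top {a b : ℤ} (h : a ≤ b + 1) (f : ℤ → ℤ) :
    ∑ t ∈ Finset.Icc a (b + 1), f t = (∑ t ∈ Finset.Icc a b, f t) + f (b + 1) := by
  have e : Finset.Icc a (b + 1) = insert (b + 1) (Finset.Icc a b) := by
    ext x
    simp only [Finset.mem_Icc, Finset.mem_insert]
    omega
  rw [e, Finset.sum_insert (by simp [Finset.mem_Icc])]
  ring

lemma SbarA_coeff_one (n : ℤ) (lam : ℤ → ℤ) (k : ℤ) (φ : Aff) (hk : φ.2 k = 1) :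
    SbarA n lam k φ =
      ⟨φ.1 - (betaBarG aA lam (iseqA n) (kpA n) k).1,
       φ.2 - (betaBarG aA lam (iseqA n) (kpA n) k).2⟩ := by
  unfold SbarA SbarG
  rw [hk, if_pos (by norm_num : (0:ℚ) < 1)]
  simp

lemma sbarPow_eval (hn : 1 ≤ n) (lam : ℤ → ℤ) {b c : ℤ} (hb : b ≠ 0)
    (hc : 1 ≤ c) (hcn : c ≤ n) (l : ℕ) (hcl : c + (l:ℤ) ≤ n + 1) (C : ℚ) (f : ℤ →₀ ℚ)
    (hf : ∀ l' : ℕ, l' < l → f (posIdx n b (c + (l':ℤ))) = 0) :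
    SbarPowA n lam b c l ⟨C, f + Finsupp.single (posIdx n b c) 1⟩ =
      ⟨C + (if b = -1 then ((∑ t ∈ Finset.Icc c (c + (l:ℤ) - 1), lam t : ℤ) : ℚ) else 0),
       f + (if c + (l:ℤ) ≤ n then Finsupp.single (posIdx n b (c + (l:ℤ))) 1 else 0)
         + (if 1 ≤ l then
             ((if 2 ≤ c then Finsupp.single (posIdx n (succb b) (c - 1)) 1 else 0)
               - Finsupp.single (posIdx n (succb b) (c + (l:ℤ) - 1)) 1)
            else 0)⟩ := by
  have hsb : b < succb b := lt_succb
  have hs0 : succb b ≠ 0 := succb_ne_zero hb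
  have hsne : succb b ≠ b := by omega
  induction l with
  | zero =>
      rw [show (SbarPowA n lam b c 0 ⟨C, f + Finsupp.single (posIdx n b c) 1⟩)
        = ⟨C, f + Finsupp.single (posIdx n b c) 1⟩ from rfl]
      refine Prod.ext ?_ ?_ <;> dsimp only
      · rw [show c + ((0:ℕ):ℤ) - 1 = c - 1 by push_cast; ring,
          Finset.Icc_eq_empty (by omega : ¬ c ≤ c - 1), Finset.sum_empty]
        split_ifs <;> norm_num
      · rw [if_neg (by norm_num : ¬ (1:ℕ) ≤ 0), add_zero,
          show c + ((0:ℕ):ℤ) = c by push_cast; ring, if_pos hcn]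
  | succ l ih =>
      have hcl' : c + (l:ℤ) ≤ n := by push_cast at hcl; omega
      rw [show (SbarPowA n lam b c (l+1) ⟨C, f + Finsupp.single (posIdx n b c) 1⟩)
        = SbarA n lam (posIdx n b (c + (l:ℤ)))
            (SbarPowA n lam b c l ⟨C, f + Finsupp.single (posIdx n b c) 1⟩) from rfl,
        ih (by omega) (fun l' h => hf l' (by omega))]
      rcases Nat.eq_zero_or_pos l with rfl | hl
      · -- l = 0 step
        have hco : (f + (if c + ((0:ℕ):ℤ) ≤ n then
              Finsupp.single (posIdx n b (c + ((0:ℕ):ℤ))) 1 else 0)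
            + (if (1:ℕ) ≤ 0 then
                ((if 2 ≤ c then Finsupp.single (posIdx n (succb b) (c - 1)) 1 else 0)
                  - Finsupp.single (posIdx n (succb b) (c + ((0:ℕ):ℤ) - 1)) 1)
               else 0) : ℤ →₀ ℚ) (posIdx n b (c + ((0:ℕ):ℤ))) = 1 := by
          rw [Finsupp.add_apply, Finsupp.add_apply, hf 0 (by omega), if_pos hcl',
            Finsupp.single_apply, if_pos rfl, if_neg (by norm_num : ¬ (1:ℕ) ≤ 0)]
          norm_num
        rw [SbarA_coeff_one n lam _ _ hco,
          betaBar_eval hn lam hb (by omega : 1 ≤ c + ((0:ℕ):ℤ)) hcl']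
        refine Prod.ext ?_ ?_ <;> dsimp only
        · rw [show c + (((0:ℕ)+1:ℕ):ℤ) - 1 = c by push_cast; ring,
            show c + ((0:ℕ):ℤ) = c by push_cast; ring,
            Finset.Icc_eq_empty (by omega : ¬ c ≤ c - 1), Finset.sum_empty,
            Finset.Icc_self, Finset.sum_singleton]
          split_ifs <;> push_cast <;> ring
        · rw [if_neg (by norm_num : ¬ (1:ℕ) ≤ 0), add_zero,
            if_pos (by norm_num : (1:ℕ) ≤ 0 + 1),
            show c + ((0:ℕ):ℤ) = c by push_cast; ring,
            show c + (((0:ℕ)+1:ℕ):ℤ) = c + 1 by push_cast; ring,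
            show c + 1 - 1 = c by ring,
            if_pos hcn]
          abel
      · -- l ≥ 1 step
        have hco : (f + (if c + (l:ℤ) ≤ n then
              Finsupp.single (posIdx n b (c + (l:ℤ))) 1 else 0)
            + (if (1:ℕ) ≤ l then
                ((if 2 ≤ c then Finsupp.single (posIdx n (succb b) (c - 1)) 1 else 0)
                  - Finsupp.single (posIdx n (succb b) (c + (l:ℤ) - 1)) 1)
               else 0) : ℤ →₀ ℚ) (posIdx n b (c + (l:ℤ))) = 1 := by
          rw [Finsupp.add_apply, Finsupp.add_apply, hf l (by omega), if_pos hcl',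
            Finsupp.single_apply, if_pos rfl, if_pos (show (1:ℕ) ≤ l by omega), Finsupp.sub_apply,
            ite_single_apply_ne' (fun g h => by
              rw [posIdx_eq_iff hn hs0 hb (by omega) (by omega) (by omega) hcl'] at h
              omega),
            Finsupp.single_apply,
            if_neg (show ¬ posIdx n (succb b) (c + (l:ℤ) - 1) = posIdx n b (c + (l:ℤ)) from
              fun h => by
                rw [posIdx_eq_iff hn hs0 hb (by omega) (by omega) (by omega) hcl'] at h
                omega)]
          norm_num
        rw [SbarA_coeff_one n lam _ _ hco,
          betaBar_eval hn lam hb (by omega : 1 ≤ c + (l:ℤ)) hcl']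
        refine Prod.ext ?_ ?_ <;> dsimp only
        · rw [show c + (((l:ℕ)+1:ℕ):ℤ) - 1 = (c + (l:ℤ) - 1) + 1 by push_cast; ring,
            sum_Icc_top (by omega : c ≤ c + (l:ℤ) - 1 + 1),
            show c + (l:ℤ) - 1 + 1 = c + (l:ℤ) by ring]
          split_ifs <;> push_cast <;> ring
        · rw [if_pos (show (1:ℕ) ≤ l by omega), if_pos (by omega : (1:ℕ) ≤ l + 1),
            if_pos (by omega : 2 ≤ c + (l:ℤ)),
            show c + (((l:ℕ)+1:ℕ):ℤ) = c + (l:ℤ) + 1 by push_cast; ring,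
            show c + (l:ℤ) + 1 - 1 = c + (l:ℤ) by ring,
            if_pos hcl']
          abel

end AuxPow
section AuxMain

/-- Block of stage `m`: `b_m = -j+m-1` for `m ≤ j` and `m - j` for `m > j`. -/
def Bblk (j m : ℤ) : ℤ := if m ≤ j then -j + m - 1 else m - j

lemma Bblk_one {j : ℤ} (hj : 1 ≤ j) : Bblk j 1 = -j := by
  unfold Bblk; rw [if_pos hj]; ring

lemma Bblk_ne_zero {j m : ℤ} (hj : 1 ≤ j) (hm : 1 ≤ m) : Bblk j m ≠ 0 := by
  unfold Bblk; split <;> omega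

lemma Bblk_lt {j m m' : ℤ} (h : m < m') (hj : 1 ≤ j) : Bblk j m < Bblk j m' := by
  unfold Bblk; split_ifs <;> omega

lemma Bblk_eq_neg_one_iff {j m : ℤ} (hj : 1 ≤ j) (hm : 1 ≤ m) :
    Bblk j m = -1 ↔ m = j := by
  unfold Bblk; split <;> omega

lemma succb_Bblk {j m : ℤ} (hj : 1 ≤ j) (hm : 1 ≤ m) :
    succb (Bblk j m) = Bblk j (m + 1) := by
  unfold succb Bblk; split_ifs <;> omega

/-- The one-stage step used in `phiMuA`. -/
noncomputable def stepA (n : ℤ) (lam : ℤ → ℤ) (j i : ℤ) (μ : ℤ → ℤ) : Aff → ℕ → Aff :=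
  fun ψ k0 =>
    SbarPowA n lam
      (if ((k0 : ℤ) + 1) ≤ j then -j + ((k0 : ℤ) + 1) - 1 else ((k0 : ℤ) + 1) - j)
      (i - ((k0 : ℤ) + 1) + 1) (μ ((k0 : ℤ) + 1)).toNat ψ

lemma stepA_eq (n : ℤ) (lam : ℤ → ℤ) (j i : ℤ) (μ : ℤ → ℤ) (ψ : Aff) (m : ℕ) :
    stepA n lam j i μ ψ m =
      SbarPowA n lam (Bblk j ((m:ℤ) + 1)) (i - (m:ℤ)) (μ ((m:ℤ) + 1)).toNat ψ := by
  simp only [stepA, Bblk]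
  rw [show i - ((m:ℤ) + 1) + 1 = i - (m:ℤ) by ring]

lemma phiMuA_eq_foldl (n : ℤ) (lam : ℤ → ℤ) (j i : ℤ) (μ : ℤ → ℤ) :
    phiMuA n lam j i μ =
      (List.range i.toNat).foldl (stepA n lam j i μ)
        ⟨0, Finsupp.single (posIdx n (-j) i) 1⟩ := by
  unfold phiMuA stepA
  rw [show (do let a ← List.range i.toNat; pure ((a:ℤ)))
      = (List.range i.toNat).map (fun a : ℕ => (a:ℤ)) by
    simp only [List.pure_def, List.bind_eq_flatMap, ← List.map_eq_flatMap],
    List.foldl_map]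

end AuxMain

/-- Type `A_n` (Hoshino–Nakashima, proof of Theorem 5.2): for
`1 ≤ j ≤ i ≤ n` and any `i`-admissible partition `μ`, the constant term of
`φ^{(μ)}_{−j;i}` is `λ_{i−j+1} + λ_{i−j+2} + ⋯ + λ_{i−j+μ_j}` (an empty sum,
equal to `0`, when `μ_j = 0`). -/
theorem phiMu_constant_term_A_n
    (n : ℤ) (hn : 1 ≤ n) (lam : ℤ → ℤ) (i0 : ℤ) (hi0 : 0 ≤ i0) (hi0n : i0 ≤ n)
    (hpos : ∀ i : ℤ, 1 ≤ i → i ≤ i0 → 0 < lam i)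
    (hneg : ∀ i : ℤ, i0 < i → i ≤ n → lam i ≤ 0) :
    ∀ j i : ℤ, 1 ≤ j → j ≤ i → i ≤ n → ∀ μ : ℤ → ℤ, admissibleA n i μ →
      (phiMuA n lam j i μ).1 =
        ((∑ t ∈ Finset.Icc (i - j + 1) (i - j + μ j), lam t : ℤ) : ℚ) := by
  intro j i hj hji hin μ hadm
  obtain ⟨hadm1, hadm2, hadm3⟩ := hadm
  have hmonoN : ∀ d : ℕ, ∀ k : ℤ, 1 ≤ k → k + d ≤ i → μ (k + d) ≤ μ k := by
    intro d
    induction d with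
    | zero => intro k _ _; simp
    | succ d ihd =>
        intro k hk hkd
        push_cast at hkd ⊢
        have h1 : μ (k + d + 1) ≤ μ (k + d) := hadm2 (k + d) (by omega) (by omega)
        have h2 := ihd k hk (by omega)
        have e : k + ((d:ℤ) + 1) = k + d + 1 := by ring
        rw [e]
        omega
  have hmono : ∀ k k' : ℤ, 1 ≤ k → k ≤ k' → k' ≤ i → μ k' ≤ μ k := by
    intro k k' hk hkk' hki
    have := hmonoN (k' - k).toNat k hk (by omega)
    rwa [show k + (((k' - k).toNat : ℕ) : ℤ) = k' by omega] at this
  have hbound : ∀ k : ℤ, 1 ≤ k → k ≤ i → 0 ≤ μ k ∧ μ k ≤ n - i + 1 := by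
    intro k h1 h2
    constructor
    · have := hmono k i h1 h2 le_rfl; omega
    · have := hmono 1 k le_rfl h1 h2; omega
  have key : ∀ m : ℕ, (m:ℤ) ≤ i → (∀ k : ℤ, 1 ≤ k → k ≤ (m:ℤ) → 1 ≤ μ k) →
      ∃ f : ℤ →₀ ℚ,
        ((List.range m).foldl (stepA n lam j i μ)
            ⟨0, Finsupp.single (posIdx n (-j) i) 1⟩ =
          ⟨(if j ≤ (m:ℤ) then
              ((∑ t ∈ Finset.Icc (i - j + 1) (i - j + μ j), lam t : ℤ) : ℚ) else 0),
           f + (if (m:ℤ) < i then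
              Finsupp.single (posIdx n (Bblk j ((m:ℤ) + 1)) (i - (m:ℤ))) 1 else 0)⟩)
        ∧ ∀ m' γ : ℤ, (m:ℤ) < m' → m' ≤ i → i - m' + 1 ≤ γ → γ ≤ i - m' + μ m' →
            f (posIdx n (Bblk j m') γ) = 0 := by
    intro m
    induction m with
    | zero =>
        intro _ _
        refine ⟨0, ?_, ?_⟩
        · rw [List.range_zero, List.foldl_nil]
          refine Prod.ext ?_ ?_ <;> dsimp only
          · rw [if_neg (show ¬ j ≤ ((0:ℕ):ℤ) by push_cast; omega)]
          · rw [zero_add, if_pos (show ((0:ℕ):ℤ) < i by omega),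
              show ((0:ℕ):ℤ) + 1 = 1 by omega, Bblk_one hj,
              show i - ((0:ℕ):ℤ) = i by omega]
        · intro m' γ _ _ _ _
          simp
    | succ m ih =>
        intro hmi hact
        have hmi' : (m:ℤ) + 1 ≤ i := by push_cast at hmi; omega
        obtain ⟨f, hstate_eq, hV⟩ := ih (by omega) (fun k h1 h2 => hact k h1 (by push_cast; omega))
        have hmu1 : 1 ≤ μ ((m:ℤ) + 1) := hact _ (by omega) (by push_cast; omega)
        have hlz : (((μ ((m:ℤ) + 1)).toNat : ℕ) : ℤ) = μ ((m:ℤ) + 1) :=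
          Int.toNat_of_nonneg (by omega)
        have hble1 : μ ((m:ℤ) + 1) ≤ n - i + 1 := (hbound _ (by omega) (by omega)).2
        refine ⟨f + (if i - (m:ℤ) + μ ((m:ℤ) + 1) ≤ n then
            Finsupp.single (posIdx n (Bblk j ((m:ℤ) + 1)) (i - (m:ℤ) + μ ((m:ℤ) + 1))) 1
            else 0)
          - Finsupp.single (posIdx n (Bblk j ((m:ℤ) + 1 + 1))
              (i - (m:ℤ) + μ ((m:ℤ) + 1) - 1)) 1, ?_, ?_⟩
        · rw [List.range_succ, List.foldl_append, List.foldl_cons, List.foldl_nil,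
            hstate_eq, stepA_eq, if_pos (show (m:ℤ) < i by omega),
            sbarPow_eval hn lam (Bblk_ne_zero hj (by omega))
              (show 1 ≤ i - (m:ℤ) by omega) (show i - (m:ℤ) ≤ n by omega)
              ((μ ((m:ℤ) + 1)).toNat) (by omega) _ f
              (fun l' hl' => hV ((m:ℤ) + 1) (i - (m:ℤ) + (l':ℤ)) (by omega) (by omega)
                (by omega) (by omega)),
            hlz, succb_Bblk hj (by omega),
            if_pos (show 1 ≤ (μ ((m:ℤ) + 1)).toNat by omega)]
          refine Prod.ext ?_ ?_ <;> dsimp only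
          · -- constant terms
            by_cases hjm : j = (m:ℤ) + 1
            · rw [if_pos (show Bblk j ((m:ℤ) + 1) = -1 by
                  rw [Bblk_eq_neg_one_iff hj (by omega)]; omega),
                if_neg (show ¬ j ≤ (m:ℤ) by omega),
                if_pos (show j ≤ ((m + 1 : ℕ):ℤ) by push_cast; omega), zero_add, hjm,
              show i - ((m:ℤ) + 1) + 1 = i - (m:ℤ) by ring,
              show i - ((m:ℤ) + 1) + μ ((m:ℤ) + 1) = i - (m:ℤ) + μ ((m:ℤ) + 1) - 1 by ring]
            · rw [if_neg (show ¬ Bblk j ((m:ℤ) + 1) = -1 by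
                  rw [Bblk_eq_neg_one_iff hj (by omega)]; omega), add_zero]
              by_cases hjm2 : j ≤ (m:ℤ)
              · rw [if_pos hjm2, if_pos (show j ≤ ((m + 1 : ℕ):ℤ) by push_cast; omega)]
              · rw [if_neg hjm2, if_neg (show ¬ j ≤ ((m + 1 : ℕ):ℤ) by push_cast; omega)]
          · -- linear parts
            push_cast
            rw [show i - ((m:ℤ) + 1) = i - (m:ℤ) - 1 by ring]
            by_cases hlast2 : (m:ℤ) + 1 < i
            · rw [if_pos (show 2 ≤ i - (m:ℤ) by omega),
                if_pos (show (m:ℤ) + 1 < i by omega)]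
              abel
            · rw [if_neg (show ¬ 2 ≤ i - (m:ℤ) by omega),
                if_neg (show ¬ (m:ℤ) + 1 < i by omega)]
              abel
        · -- vanishing property
          intro m' γ h1' h2' h3' h4'
          push_cast at h1'
          have hγ1 : 1 ≤ γ := by omega
          have hγn : γ ≤ n := by
            have := (hbound m' (by omega) (by omega)).2
            omega
          have hμm' : μ m' ≤ μ ((m:ℤ) + 1) := hmono ((m:ℤ) + 1) m' (by omega) (by omega) (by omega)
          rw [Finsupp.sub_apply, Finsupp.add_apply, hV m' γ (by omega) h2' h3' h4',
            ite_single_apply_ne' (fun g h => by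
              rw [posIdx_eq_iff hn (Bblk_ne_zero hj (by omega)) (Bblk_ne_zero hj (by omega))
                (by omega) g hγ1 hγn] at h
              have := Bblk_lt (show (m:ℤ) + 1 < m' by omega) hj
              omega),
            Finsupp.single_apply,
            if_neg (show ¬ posIdx n (Bblk j ((m:ℤ) + 1 + 1))
                (i - (m:ℤ) + μ ((m:ℤ) + 1) - 1) = posIdx n (Bblk j m') γ from fun h => by
              rw [posIdx_eq_iff hn (Bblk_ne_zero hj (by omega)) (Bblk_ne_zero hj (by omega))
                (by omega) (by omega) hγ1 hγn] at h
              rcases h with ⟨hbb, hcc⟩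
              rcases lt_trichotomy ((m:ℤ) + 1 + 1) m' with ht | ht | ht
              · have := Bblk_lt ht hj; omega
              · omega
              · have := Bblk_lt (show m' < (m:ℤ) + 1 + 1 by omega) hj; omega)]
          norm_num
  rw [phiMuA_eq_foldl]
  by_cases hall : ∀ k : ℤ, 1 ≤ k → k ≤ i → 1 ≤ μ k
  · obtain ⟨f, hstate_eq, -⟩ := key i.toNat (by omega)
      (fun k h1 h2 => hall k h1 (by omega))
    rw [hstate_eq]
    dsimp only
    rw [if_pos (show j ≤ ((i.toNat : ℕ) : ℤ) by omega)]
  · push_neg at hall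
    obtain ⟨k₀, hk1, hk2, hk3⟩ := hall
    have hex : ∃ m : ℕ, μ ((m:ℤ) + 1) < 1 := by
      refine ⟨(k₀ - 1).toNat, ?_⟩
      rw [show (((k₀ - 1).toNat : ℕ) : ℤ) + 1 = k₀ by omega]
      omega
    classical
    set m₁ := Nat.find hex with hm₁def
    have hm₁P : μ ((m₁:ℤ) + 1) < 1 := Nat.find_spec hex
    have hm₁min : ∀ m : ℕ, m < m₁ → 1 ≤ μ ((m:ℤ) + 1) := by
      intro m h
      have := Nat.find_min hex h
      omega
    have hm₁le : m₁ ≤ (k₀ - 1).toNat := by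
      apply Nat.find_min'
      rw [show (((k₀ - 1).toNat : ℕ) : ℤ) + 1 = k₀ by omega]
      omega
    have hm₁i : (m₁:ℤ) ≤ i - 1 := by omega
    have hact : ∀ k : ℤ, 1 ≤ k → k ≤ (m₁:ℤ) → 1 ≤ μ k := by
      intro k h1 h2
      have h3 : (k - 1).toNat < m₁ := by omega
      have := hm₁min _ h3
      rwa [show (((k - 1).toNat : ℕ) : ℤ) + 1 = k by omega] at this
    obtain ⟨f, hstate_eq, -⟩ := key m₁ (by omega) hact
    have hdead : ∀ M : ℕ, m₁ ≤ M → M ≤ i.toNat →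
        (List.range M).foldl (stepA n lam j i μ)
            ⟨0, Finsupp.single (posIdx n (-j) i) 1⟩ =
          (List.range m₁).foldl (stepA n lam j i μ)
            ⟨0, Finsupp.single (posIdx n (-j) i) 1⟩ := by
      intro M hM1
      induction M, hM1 using Nat.le_induction with
      | base => intro _; rfl
      | succ M hM ihM =>
          intro hM2
          rw [List.range_succ, List.foldl_append, List.foldl_cons, List.foldl_nil,
            ihM (by omega), stepA_eq]
          have hz : (μ ((M:ℤ) + 1)).toNat = 0 := by
            have hμM : μ ((M:ℤ) + 1) ≤ μ ((m₁:ℤ) + 1) :=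
              hmono ((m₁:ℤ) + 1) ((M:ℤ) + 1) (by omega) (by omega) (by omega)
            omega
          rw [hz]
          rfl
    rw [hdead i.toNat (by omega) le_rfl, hstate_eq]
    dsimp only
    by_cases hjm : j ≤ (m₁:ℤ)
    · rw [if_pos hjm]
    · rw [if_neg hjm]
      have hz : μ j = 0 := by
        have h1 := hmono ((m₁:ℤ) + 1) j (by omega) (by omega) (by omega)
        have h2 := (hbound j (by omega) (by omega)).1
        omega
      rw [hz, add_zero, Finset.Icc_eq_empty (by omega : ¬ i - j + 1 ≤ i - j),
        Finset.sum_empty]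
      norm_num
end

section
/- Let x_0 be the family with (x_0)_{−k} = −C_{−k} for all k ≥ 1. Then σ_{−k}(x_0) ≤ 0 for every k ≥ 1. (Hence the vector (…,0,0,t_λ,−C_{−1},−C_{−2},…,−C_{−k},…) is a highest weight vector of the crystal ℤ^∞_ι[λ], as asserted in Theorem 6.1.) -/
noncomputable section

/-- `C_{−k} = (−(k−1)λ_1 − kλ_2)_+`, type `A_1^{(1)}`. -/
def CB (lam1 lam2 k : ℤ) : ℤ := max 0 (-(k - 1) * lam1 - k * lam2)

/-- `σ_{−k}(x) = −λ_{ε(k)} + x_{−k} + Σ_{m=1}^{k−1} c_{k,m} x_{−m}` where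
`ε(k) = 2` for `k` odd, `ε(k) = 1` for `k` even, and `c_{k,m} = 2` if
`k ≡ m (mod 2)`, `c_{k,m} = −2` otherwise; here `x m` denotes the
coordinate `x_{−m}`. -/
def sigmaB (lam1 lam2 : ℤ) (x : ℤ → ℤ) (k : ℤ) : ℤ :=
  -(if k % 2 = 0 then lam1 else lam2) + x k +
    ∑ m ∈ Finset.Icc 1 (k - 1), (if k % 2 = m % 2 then 2 else -2) * x m

end

lemma CB_eq (lam1 lam2 k : ℤ) : CB lam1 lam2 k = max 0 (lam1 - k * (lam1 + lam2)) := by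
  unfold CB; congr 1; ring

lemma sigma_rec (lam1 lam2 : ℤ) (x : ℤ → ℤ) (k : ℤ) (hk : 1 ≤ k) :
    sigmaB lam1 lam2 x (k + 1)
      = -sigmaB lam1 lam2 x k - (lam1 + lam2) + x (k + 1) - x k := by
  unfold sigmaB
  have h1 : k + 1 - 1 = k := by ring
  rw [h1]
  have h2 : Finset.Icc (1:ℤ) k = insert k (Finset.Icc 1 (k - 1)) := by
    ext m; simp [Finset.mem_Icc]; omega
  rw [h2, Finset.sum_insert (by simp [Finset.mem_Icc])]
  have h3 : ∀ m : ℤ, (if (k+1) % 2 = m % 2 then (2:ℤ) else -2)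
      = -(if k % 2 = m % 2 then 2 else -2) := by
    intro m; split_ifs <;> omega
  have h4 : ∑ m ∈ Finset.Icc (1:ℤ) (k-1), (if (k+1) % 2 = m % 2 then (2:ℤ) else -2) * x m
      = -∑ m ∈ Finset.Icc (1:ℤ) (k-1), (if k % 2 = m % 2 then (2:ℤ) else -2) * x m := by
    rw [← Finset.sum_neg_distrib]
    exact Finset.sum_congr rfl fun m _ => by rw [h3, neg_mul]
  rw [h4, h3 k]
  have h5 : (if (k+1) % 2 = 0 then lam1 else lam2) + (if k % 2 = 0 then lam1 else lam2)
      = lam1 + lam2 := by split_ifs <;> omega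
  have hc : (if k % 2 = k % 2 then (2:ℤ) else -2) = 2 := by simp
  rw [hc]
  linarith [h5]

/-- Type `A_1^{(1)}`: for a positive-level weight `λ = λ_1Λ_1 + λ_2Λ_2`
(`λ_1 > 0`, `λ_2 ≤ 0`, `λ_1 + λ_2 > 0`), the vector `x₀` with coordinates
`(x₀)_{−k} = −C_{−k}` satisfies `σ_{−k}(x₀) ≤ 0` for all `k ≥ 1`; hence
`(…,0,0,t_λ,−C_{−1},−C_{−2},…)` is a highest weight vector of `ℤ^∞_ι[λ]`
(Hoshino–Nakashima, Theorem 6.1). -/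
theorem sigma_nonpos_at_minus_C_A_1_1
    (lam1 lam2 : ℤ) (h1 : 0 < lam1) (h2 : lam2 ≤ 0) (hlev : 0 < lam1 + lam2) :
    ∀ k : ℤ, 1 ≤ k → sigmaB lam1 lam2 (fun m => -CB lam1 lam2 m) k ≤ 0 := by
  have main : ∀ k : ℤ, 1 ≤ k →
      CB lam1 lam2 k - CB lam1 lam2 (k+1) - (lam1 + lam2)
        ≤ sigmaB lam1 lam2 (fun m => -CB lam1 lam2 m) k ∧
      sigmaB lam1 lam2 (fun m => -CB lam1 lam2 m) k ≤ 0 := by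
    have key : ∀ n : ℕ,
        CB lam1 lam2 (1 + (n:ℤ)) - CB lam1 lam2 ((1 + (n:ℤ))+1) - (lam1 + lam2)
          ≤ sigmaB lam1 lam2 (fun m => -CB lam1 lam2 m) (1 + (n:ℤ)) ∧
        sigmaB lam1 lam2 (fun m => -CB lam1 lam2 m) (1 + (n:ℤ)) ≤ 0 := by
      intro n
      induction n with
      | zero =>
        norm_num
        have hs : sigmaB lam1 lam2 (fun m => -CB lam1 lam2 m) 1
            = -lam2 - CB lam1 lam2 1 := by
          unfold sigmaB
          norm_num
          ring
        rw [hs, CB_eq, CB_eq]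
        constructor
        · simp only [max_def]; split_ifs <;> omega
        · simp only [max_def]; split_ifs <;> omega
      | succ n ih =>
        obtain ⟨ih1, ih2⟩ := ih
        set k : ℤ := 1 + (n:ℤ) with hkdef
        have hk : 1 ≤ k := by omega
        have hc1 : (1 + ((n+1:ℕ)):ℤ) = k + 1 := by push_cast; ring
        rw [hc1, sigma_rec lam1 lam2 _ k hk]
        have e1 : CB lam1 lam2 k = max 0 (lam1 - k * (lam1 + lam2)) := CB_eq ..
        have e2 : CB lam1 lam2 (k+1) = max 0 (lam1 - k * (lam1 + lam2) - (lam1 + lam2)) := by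
          rw [CB_eq]; congr 1; ring
        have e3 : CB lam1 lam2 (k+1+1) = max 0 (lam1 - k * (lam1 + lam2) - 2*(lam1 + lam2)) := by
          rw [CB_eq]; congr 1; ring
        set a := lam1 - k * (lam1 + lam2) with ha
        rw [e1] at ih1 ⊢
        rw [e2] at ih1 ⊢
        rw [e3]
        have conv : 0 ≤ max 0 a - 2 * max 0 (a - (lam1+lam2)) + max 0 (a - 2*(lam1+lam2)) := by
          simp only [max_def]; split_ifs <;> omega
        constructor
        · linarith
        · linarith
    intro k hk
    obtain ⟨n, rfl⟩ : ∃ n : ℕ, k = 1 + (n:ℤ) := ⟨(k-1).toNat, by omega⟩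
    exact key n
  intro k hk
  exact (main k hk).2
end

section
/- Let x_0 be the family with (x_0)_{−k} = −C_{−k} for all k ≥ 1, and for k ≥ 1 set D_{−k} := σ_{−k}(x_0) + C_{−k}. Then: (i) if D_{−k} ≤ 0, then C_{−k} = 0; (ii) if D_{−k} > 0, then D_{−k} = (−(k−1)λ_1 − kλ_2)_+ = C_{−k}. -/
/-!
Adding consecutive values of `σ`, the coefficients `c_{k+1,m} = -c_{k,m}` cancel the common
part of the sums, so `D_{-(k+1)} + D_{-k} = -(λ_1 + λ_2) + 2 C_{-k}`, while `D_{-1} = -λ_2`.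
Since `-(k-1)λ_1 - kλ_2` drops by the level `λ_1 + λ_2` at each step, induction shows that `D_{-k}`
equals it as long as it is nonnegative, and afterwards stays in `[-(λ_1 + λ_2), 0]`.
-/

lemma sigmaB_one (lam1 lam2 : ℤ) (x : ℤ → ℤ) : sigmaB lam1 lam2 x 1 = -lam2 + x 1 := by
  simp [sigmaB]

lemma sigmaB_add_one_add_sigmaB (lam1 lam2 : ℤ) (x : ℤ → ℤ) {k : ℤ} (hk : 1 ≤ k) :
    sigmaB lam1 lam2 x (k + 1) + sigmaB lam1 lam2 x k = -(lam1 + lam2) + x (k + 1) - x k := by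
  have hIcc : Finset.Icc 1 (k + 1 - 1) = insert k (Finset.Icc 1 (k - 1)) := by
    ext m; simp only [Finset.mem_Icc, Finset.mem_insert]; omega
  have hcoeff : ∀ m : ℤ, (if (k + 1) % 2 = m % 2 then (2 : ℤ) else -2)
      = -(if k % 2 = m % 2 then 2 else -2) := fun m => by split_ifs <;> omega
  have hlam : (if (k + 1) % 2 = 0 then lam1 else lam2) + (if k % 2 = 0 then lam1 else lam2)
      = lam1 + lam2 := by split_ifs <;> omega
  simp only [sigmaB, hIcc, Finset.sum_insert (show k ∉ Finset.Icc 1 (k - 1) by simp), hcoeff,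
    neg_mul, Finset.sum_neg_distrib, if_true]
  linarith

section

variable {lam1 lam2 : ℤ} {D : ℤ → ℤ}
  (hD : ∀ k : ℤ, D k = sigmaB lam1 lam2 (fun m => -CB lam1 lam2 m) k + CB lam1 lam2 k)
include hD

lemma D_one : D 1 = -lam2 := by
  rw [hD, sigmaB_one]; ring

lemma D_add_one {k : ℤ} (hk : 1 ≤ k) : D (k + 1) = -(lam1 + lam2) + 2 * CB lam1 lam2 k - D k := by
  have := sigmaB_add_one_add_sigmaB lam1 lam2 (fun m => -CB lam1 lam2 m) hk
  rw [hD (k + 1), hD k]; linarith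

lemma D_eq_or_mem_Icc (h2 : lam2 ≤ 0) (hlev : 0 < lam1 + lam2) {k : ℤ} (hk : 1 ≤ k) :
    (0 ≤ -(k - 1) * lam1 - k * lam2 ∧ D k = -(k - 1) * lam1 - k * lam2) ∨
      (-(k - 1) * lam1 - k * lam2 < 0 ∧ D k ∈ Set.Icc (-(lam1 + lam2)) 0) := by
  induction k, hk using Int.leInduction with
  | base => left; rw [D_one hD]; constructor <;> linarith
  | succ k hk ih =>
    rw [D_add_one hD hk, Set.mem_Icc]
    rcases ih with ⟨hf, hDk⟩ | ⟨hf, hlo, hhi⟩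
    · rw [CB, max_eq_right hf, hDk]
      by_cases hf' : 0 ≤ -(k + 1 - 1) * lam1 - (k + 1) * lam2
      · left; constructor <;> linarith
      · right; refine ⟨by linarith, ?_, ?_⟩ <;> linarith
    · rw [CB, max_eq_left hf.le]
      right; refine ⟨by linarith, ?_, ?_⟩ <;> linarith

end

theorem D_le_zero_imp_C_eq_zero_and_D_pos_imp_D_eq_C_A_1_1_general
    (lam1 lam2 : ℤ) (h2 : lam2 ≤ 0) (hlev : 0 < lam1 + lam2)
    (D : ℤ → ℤ)
    (hD : ∀ k : ℤ, D k =
      sigmaB lam1 lam2 (fun m => -CB lam1 lam2 m) k + CB lam1 lam2 k) :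
    ∀ k : ℤ, 1 ≤ k →
      (D k ≤ 0 → CB lam1 lam2 k = 0) ∧
      (0 < D k → D k = max 0 (-(k - 1) * lam1 - k * lam2) ∧
        D k = CB lam1 lam2 k) := by
  intro k hk
  rw [CB]
  rcases D_eq_or_mem_Icc hD h2 hlev hk with ⟨hf, hDk⟩ | ⟨hf, -, hDk⟩ <;> omega

/-- Type `A_1^{(1)}` (Hoshino–Nakashima, Lemma 6.3): with `x₀` the vector with
coordinates `(x₀)_{−k} = −C_{−k}` and `D_{−k} := σ_{−k}(x₀) + C_{−k}`, one has
for all `k ≥ 1`: (i) if `D_{−k} ≤ 0` then `C_{−k} = 0`;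
(ii) if `D_{−k} > 0` then `D_{−k} = (−(k−1)λ_1 − kλ_2)_+ = C_{−k}`. -/
theorem D_le_zero_imp_C_eq_zero_and_D_pos_imp_D_eq_C_A_1_1
    (lam1 lam2 : ℤ) (h1 : 0 < lam1) (h2 : lam2 ≤ 0) (hlev : 0 < lam1 + lam2)
    (D : ℤ → ℤ)
    (hD : ∀ k : ℤ, D k =
      sigmaB lam1 lam2 (fun m => -CB lam1 lam2 m) k + CB lam1 lam2 k) :
    ∀ k : ℤ, 1 ≤ k →
      (D k ≤ 0 → CB lam1 lam2 k = 0) ∧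
      (0 < D k → D k = max 0 (-(k - 1) * lam1 - k * lam2) ∧
        D k = CB lam1 lam2 k) :=
  D_le_zero_imp_C_eq_zero_and_D_pos_imp_D_eq_C_A_1_1_general lam1 lam2 h2 hlev D hD
end

section
/- For every k ≥ 1 and l ≥ 0, the constant term of φ^{(l)}_{−k} is: φ^{(l)}_{−k}(0) = (k−1)λ_1 + kλ_2 if l ≥ k; φ^{(l)}_{−k}(0) = (k−1)λ_1 if l = k−1; and φ^{(l)}_{−k}(0) = 0 if l ≤ k−2. -/
noncomputable section

/-- The sequence `ι = (…,2,1,2,1,t_λ,2,1,2,1,…)` of type `A_1^{(1)}`: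
`i_k = 1` for `k ≥ 1` odd, `i_k = 2` for `k ≥ 1` even, `i_{−m} = 2` for
`m ≥ 1` odd, `i_{−m} = 1` for `m ≥ 1` even. -/
def iseqB (k : ℤ) : ℤ :=
  if 0 < k then (if k % 2 = 1 then 1 else 2) else (if k % 2 = 1 then 2 else 1)

/-- The Cartan matrix of type `A_1^{(1)}`: `a_{11} = a_{22} = 2`,
`a_{12} = a_{21} = −2`. -/
def aB (p q : ℤ) : ℤ := if p = q then 2 else -2

/-- The weight coefficients: `ℓ 1 = λ_1`, `ℓ 2 = λ_2`. -/
def lamB (lam1 lam2 : ℤ) (p : ℤ) : ℤ := if p = 1 then lam1 else lam2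

/-- `k^{(+)}` for the type `A_1^{(1)}` sequence. -/
def kpB (k : ℤ) : ℤ := if -2 ≤ k ∧ k ≤ -1 then k + 3 else k + 2

/-- `k^{(−)}` for the type `A_1^{(1)}` sequence. -/
def kmB (k : ℤ) : ℤ := if 1 ≤ k ∧ k ≤ 2 then k - 3 else k - 2

/-- The operator `S̄` at position `k` for the type `A_1^{(1)}` sequence. -/
def SbarB (lam1 lam2 : ℤ) (k : ℤ) (φ : Aff) : Aff :=
  SbarG aB (lamB lam1 lam2) iseqB kpB kmB k φ

/-- The generator `x_{−k} + C_{−k}` of `Ξ'_ι[λ]`, as an affine function. -/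
def genB (lam1 lam2 : ℤ) (k : ℤ) : Aff :=
  ⟨(CB lam1 lam2 k : ℚ), Finsupp.single (-k) 1⟩

/-- `Ξ'_ι[λ] = { S̄_{−j_l} ⋯ S̄_{−j_1}(x_{−k} + C_{−k}) :
l ≥ 0, k ≥ 1, j_1,…,j_l ≥ 1 }` for type `A_1^{(1)}`. -/
def XiPrimeB (lam1 lam2 : ℤ) : Set Aff :=
  { φ | ∃ js : List ℤ, (∀ m ∈ js, 1 ≤ m) ∧ ∃ k : ℤ, 1 ≤ k ∧
      φ = js.foldl (fun ψ m => SbarB lam1 lam2 (-m) ψ) (genB lam1 lam2 k) }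

/-- `φ^{(l)}_{−k}`: `S̄` applied to `x_{−k}` at the `l` consecutive nonzero
positions `−k, −k+1, …` (skipping `0`). -/
def phiLB (lam1 lam2 k : ℤ) : ℕ → Aff
  | 0 => ⟨0, Finsupp.single (-k) 1⟩
  | l + 1 =>
      SbarB lam1 lam2 (if (-k + (l : ℤ)) < 0 then -k + (l : ℤ) else -k + (l : ℤ) + 1)
        (phiLB lam1 lam2 k l)

/-- The coordinate `x_t`, with the convention that the coordinate indexed by
`0` is `0`. -/
def Xc0 (x : ℤ → ℚ) (t : ℤ) : ℚ := if t = 0 then 0 else x t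

end

/-! The nonzero integers are enumerated in order by `skipZero`, and along this enumeration
`ι` alternates, `k^{(+)}` is two steps ahead and every `β̄` has linear part
`x_p − 2 x_{p+1} + x_{p+2}`; its constant is nonzero only at `p = −1, −2`, where `β̄_p`
straddles `0`. Hence `φ^{(l)}_{−k}` keeps the shape `c + (l+1) x_p − l x_{p+1}` with
`p = −k + l`, each `S̄` subtracts `(l+1) β̄_p`, and the constant term only changes in the
two steps that cross `0`: by `(k−1) λ_1` and then by `k λ_2`. -/

noncomputable section

def skipZero (p : ℤ) : ℤ := if p < 0 then p else p + 1

lemma skipZero_ne_zero (p : ℤ) : skipZero p ≠ 0 := by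
  unfold skipZero; split_ifs <;> omega

lemma skipZero_strictMono : StrictMono skipZero := by
  intro p q hpq
  unfold skipZero; split_ifs <;> omega

lemma eq_skipZero_add_one_of_between {p j : ℤ} (hlo : skipZero p < j)
    (hhi : j < skipZero (p + 2)) (hj : j ≠ 0) : j = skipZero (p + 1) := by
  unfold skipZero at *; split_ifs at * <;> omega

lemma kpB_skipZero (p : ℤ) : kpB (skipZero p) = skipZero (p + 2) := by
  unfold kpB skipZero; split_ifs <;> omega

lemma aB_iseqB_skipZero_add_one (p : ℤ) :
    aB (iseqB (skipZero p)) (iseqB (skipZero (p + 1))) = -2 := by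
  unfold aB iseqB skipZero; split_ifs <;> omega

def betaBarConstB (lam1 lam2 p : ℤ) : ℚ :=
  if p = -1 then -(lam2 : ℚ) else if p = -2 then -(lam1 : ℚ) else 0

lemma betaBarG_skipZero (lam1 lam2 p : ℤ) :
    betaBarG aB (lamB lam1 lam2) iseqB kpB (skipZero p) =
      ⟨betaBarConstB lam1 lam2 p,
       Finsupp.single (skipZero p) 1 + Finsupp.single (skipZero (p + 1)) (-2)
         + Finsupp.single (skipZero (p + 2)) 1⟩ := by
  have hAB := skipZero_strictMono (lt_add_one p)
  have hBC := skipZero_strictMono (show p + 1 < p + 2 by omega)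
  have hB0 := skipZero_ne_zero (p + 1)
  refine Prod.ext ?_ ?_
  · simp only [betaBarG, betaBarConstB, kpB_skipZero]
    unfold skipZero iseqB lamB
    split_ifs <;> first | (exfalso; omega) | norm_num
  · ext j
    simp only [betaBarG, Finsupp.onFinset_apply, Finsupp.coe_add, Pi.add_apply,
      Finsupp.single_apply, kpB_skipZero]
    by_cases hmid : skipZero p < j ∧ j < skipZero (p + 2) ∧ j ≠ 0
    · obtain rfl := eq_skipZero_add_one_of_between hmid.1 hmid.2.1 hmid.2.2
      rw [if_pos hmid, aB_iseqB_skipZero_add_one]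
      split_ifs <;> first | (exfalso; omega) | norm_num
    · rw [if_neg hmid]
      split_ifs <;> first | (exfalso; omega) | norm_num

def twoTerm (c : ℚ) (p : ℤ) (n : ℚ) : Aff :=
  ⟨c, Finsupp.single (skipZero p) (n + 1) + Finsupp.single (skipZero (p + 1)) (-n)⟩

lemma SbarB_twoTerm (lam1 lam2 p : ℤ) (c : ℚ) {n : ℚ} (hn : -1 < n) :
    SbarB lam1 lam2 (skipZero p) (twoTerm c p n) =
      twoTerm (c - (n + 1) * betaBarConstB lam1 lam2 p) (p + 1) (n + 1) := by
  have hcoeff : (twoTerm c p n).2 (skipZero p) = n + 1 := by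
    simp [twoTerm, (skipZero_strictMono (lt_add_one p)).ne]
  rw [SbarB, SbarG, hcoeff, if_pos (by linarith), betaBarG_skipZero]
  have hAB := skipZero_strictMono (lt_add_one p)
  have hBC := skipZero_strictMono (show p + 1 < p + 2 by omega)
  refine Prod.ext rfl ?_
  ext j
  simp only [twoTerm, Finsupp.coe_sub, Finsupp.coe_add, Finsupp.coe_smul, Pi.sub_apply,
    Pi.add_apply, Pi.smul_apply, Finsupp.single_apply, smul_eq_mul, add_assoc]
  norm_num only [show p + 1 + 1 = p + 2 by ring]
  split_ifs <;> first | (exfalso; omega) | ring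

def phiConstB (lam1 lam2 k : ℤ) (l : ℕ) : ℚ :=
  if k ≤ (l : ℤ) then (((k - 1) * lam1 + k * lam2 : ℤ) : ℚ)
  else if (l : ℤ) = k - 1 then (((k - 1) * lam1 : ℤ) : ℚ)
  else 0

lemma phiConstB_succ (lam1 lam2 k : ℤ) (l : ℕ) :
    phiConstB lam1 lam2 k (l + 1) =
      phiConstB lam1 lam2 k l - (l + 1) * betaBarConstB lam1 lam2 (-k + l) := by
  have hcases : k ≤ l ∨ k = l + 1 ∨ k = l + 2 ∨ (l : ℤ) + 2 < k := by omega
  unfold phiConstB betaBarConstB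
  rcases hcases with hkl | rfl | rfl | hkl <;>
    split_ifs <;> first | (exfalso; omega) | (push_cast; ring)

lemma phiLB_eq_twoTerm (lam1 lam2 : ℤ) {k : ℤ} (hk : 1 ≤ k) (l : ℕ) :
    phiLB lam1 lam2 k l = twoTerm (phiConstB lam1 lam2 k l) (-k + l) l := by
  induction l with
  | zero =>
    have hk0 : skipZero (-k) = -k := if_pos (by omega)
    simp only [phiLB, twoTerm, phiConstB, Nat.cast_zero, add_zero, zero_add, hk0,
      neg_zero, Finsupp.single_zero, if_neg (show ¬k ≤ 0 by omega)]
    split_ifs with hk1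
    · obtain rfl : k = 1 := by omega
      simp
    · rfl
  | succ l ih =>
    change SbarB lam1 lam2 (skipZero (-k + l)) _ = _
    rw [ih, SbarB_twoTerm _ _ _ _ (by norm_cast; omega), ← phiConstB_succ]
    congr 1 <;> push_cast <;> ring

end

theorem phiL_constant_term_A_1_1_general
    (lam1 lam2 : ℤ) :
    ∀ k : ℤ, 1 ≤ k → ∀ l : ℕ,
      (phiLB lam1 lam2 k l).1 =
        if k ≤ (l : ℤ) then (((k - 1) * lam1 + k * lam2 : ℤ) : ℚ)
        else if (l : ℤ) = k - 1 then (((k - 1) * lam1 : ℤ) : ℚ)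
        else 0 :=
  fun _ hk l => congrArg Prod.fst (phiLB_eq_twoTerm lam1 lam2 hk l)

/-- Type `A_1^{(1)}` (Hoshino–Nakashima, proof of Theorem 6.1): the constant
term of `φ^{(l)}_{−k}` is `(k−1)λ_1 + kλ_2` if `l ≥ k`, `(k−1)λ_1` if
`l = k−1`, and `0` if `l ≤ k−2`. -/
theorem phiL_constant_term_A_1_1
    (lam1 lam2 : ℤ) (h1 : 0 < lam1) (h2 : lam2 ≤ 0) (hlev : 0 < lam1 + lam2) :
    ∀ k : ℤ, 1 ≤ k → ∀ l : ℕ,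
      (phiLB lam1 lam2 k l).1 =
        if k ≤ (l : ℤ) then (((k - 1) * lam1 + k * lam2 : ℤ) : ℚ)
        else if (l : ℤ) = k - 1 then (((k - 1) * lam1 : ℤ) : ℚ)
        else 0 :=
  phiL_constant_term_A_1_1_general lam1 lam2
end
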